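/- arXiv:2506.15281 — 9 statements merged into one kernel-verified Lean document; each statement's English description precedes it below -/
import Mathlib

section
/- Let K be a field, n ≥ 1, and S = S₁ × ⋯ × Sₙ a grid with each Sᵢ a finite subset of K. If f ∈ K[x₁,…,xₙ] contains a monomial x₁^{α₁}⋯xₙ^{αₙ} with αᵢ < |Sᵢ| for all i, and deg(f) = α₁ + ⋯ + αₙ, then there exists s ∈ S with f(s) ≠ 0. -/
/-- A finite set `A ⊆ K` is `lam`-null: the coefficients of `∏_{a∈A}(x-a)` in
degrees `|A|-lam, …, |A|-1` vanish. -/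
def IsNull {K : Type*} [Field K] (lam : ℕ) (A : Finset K) : Prop :=
  ∀ b : ℕ, A.card - lam ≤ b → b < A.card →
    (∏ a ∈ A, (Polynomial.X - Polynomial.C a)).coeff b = 0

/-- A multivariate polynomial is `lam`-lacunary. -/
def MvLacunary {K : Type*} [CommSemiring K] {n : ℕ} (lam : Fin n → ℕ)
    (g : MvPolynomial (Fin n) K) : Prop :=
  ∃ μ ∈ g.support, ∀ ν ∈ g.support, ∀ i, ν i + lam i < μ i ∨ ν i = μ i

/-- An admissible monomial ordering: total order compatible with addition
and refining coordinatewise divisibility. -/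
def Admissible {n : ℕ} (ord : LinearOrder (Fin n →₀ ℕ)) : Prop :=
  (∀ a b c : Fin n →₀ ℕ, ord.le a b → ord.le (a + c) (b + c)) ∧
  (∀ a b : Fin n →₀ ℕ, (∀ i, a i ≤ b i) → ord.le a b)

/-- Leading exponent of a nonzero polynomial w.r.t. an ordering. -/
noncomputable def leadExp {K : Type*} [CommSemiring K] {n : ℕ}
    (ord : LinearOrder (Fin n →₀ ℕ)) (g : MvPolynomial (Fin n) K) (hg : g ≠ 0) :
    Fin n →₀ ℕ :=
  @Finset.max' _ ord g.support (MvPolynomial.support_nonempty.mpr hg)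

/-- The vanishing ideal of a set of points. -/
noncomputable def vanishingIdealOn {K : Type*} [Field K] {n : ℕ} (X : Set (Fin n → K)) :
    Ideal (MvPolynomial (Fin n) K) where
  carrier := {f | ∀ x ∈ X, MvPolynomial.eval x f = 0}
  add_mem' := by intro a b ha hb x hx; simp [ha x hx, hb x hx]
  zero_mem' := by intro x hx; simp
  smul_mem' := by intro c a ha x hx; simp [smul_eq_mul, ha x hx]

/-- `B` is a Gröbner basis of `I` w.r.t. `ord`. -/
def IsGroebner {K : Type*} [Field K] {n : ℕ} (ord : LinearOrder (Fin n →₀ ℕ))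
    (B : Set (MvPolynomial (Fin n) K)) (I : Ideal (MvPolynomial (Fin n) K)) : Prop :=
  Ideal.span B = I ∧
  ∀ f, f ∈ I → ∀ hf : f ≠ 0, ∃ g ∈ B, ∃ hg : g ≠ 0,
    ∀ i, leadExp ord g hg i ≤ leadExp ord f hf i

/-- Standard monomials of an ideal `J`: exponents not divisible by the leading
monomial of any nonzero element of `J`. -/
def stdMon {K : Type*} [Field K] {n : ℕ} (ord : LinearOrder (Fin n →₀ ℕ))
    (J : Ideal (MvPolynomial (Fin n) K)) : Set (Fin n →₀ ℕ) :=
  {α | ∀ g ∈ J, ∀ hg : g ≠ 0, ¬ ∀ i, leadExp ord g hg i ≤ α i}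

/-- `f` has a zero of multiplicity ≥ t at `c`: `f(x + c) ∈ ⟨x₁,…,xₙ⟩^t`. -/
def HasMultZero {K : Type*} [Field K] {n : ℕ} (t : ℕ) (c : Fin n → K)
    (f : MvPolynomial (Fin n) K) : Prop :=
  MvPolynomial.eval₂Hom MvPolynomial.C
      (fun i => MvPolynomial.X i + MvPolynomial.C (c i)) f ∈
    (Ideal.span (Set.range (MvPolynomial.X : Fin n → MvPolynomial (Fin n) K))) ^ t

section CNSAux

open MvPolynomial

variable {K : Type*} [Field K] {n : ℕ}

private noncomputable def sub1 (i : Fin n) (a : K) : Fin n → MvPolynomial (Fin n) K :=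
  fun j => if j = i then C a else X j

private lemma sub1_dvd (i : Fin n) (a : K) (f : MvPolynomial (Fin n) K) :
    ∃ g, f - aeval (sub1 i a) f = (X i - C a) * g := by
  induction f using MvPolynomial.induction_on with
  | C c => exact ⟨0, by simp [sub1]⟩
  | add p q hp hq =>
    obtain ⟨g1, h1⟩ := hp; obtain ⟨g2, h2⟩ := hq
    exact ⟨g1 + g2, by rw [map_add]; linear_combination h1 + h2⟩
  | mul_X p j hp =>
    obtain ⟨g1, h1⟩ := hp
    by_cases hj : j = i
    · subst hj
      refine ⟨g1 * X j + aeval (sub1 j a) p, ?_⟩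
      rw [map_mul, aeval_X, sub1, if_pos rfl]
      linear_combination (X j : MvPolynomial (Fin n) K) * h1
    · refine ⟨g1 * X j, ?_⟩
      rw [map_mul, aeval_X, sub1, if_neg hj]
      linear_combination (X j : MvPolynomial (Fin n) K) * h1

private lemma sub1_coeff (i : Fin n) (a : K) (f : MvPolynomial (Fin n) K) :
    ∀ β : Fin n →₀ ℕ, β i ≠ 0 → coeff β (aeval (sub1 i a) f) = 0 := by
  induction f using MvPolynomial.induction_on with
  | C c =>
    intro β hβ
    rw [aeval_C, algebraMap_eq, coeff_C, if_neg]
    intro h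
    exact hβ (by simp [← h])
  | add p q hp hq =>
    intro β hβ
    rw [map_add, coeff_add, hp β hβ, hq β hβ, add_zero]
  | mul_X p j hp =>
    intro β hβ
    rw [map_mul, aeval_X, sub1]
    by_cases hj : j = i
    · rw [if_pos hj, mul_comm, coeff_C_mul, hp β hβ, mul_zero]
    · rw [if_neg hj, coeff_mul_X']
      split_ifs with hmem
      · refine hp _ ?_
        simpa [Finsupp.tsub_apply, Finsupp.single_apply, hj] using hβ
      · rfl

private lemma sub1_deg (i : Fin n) (a : K) (f : MvPolynomial (Fin n) K) :
    (aeval (sub1 i a) f).totalDegree ≤ f.totalDegree := by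
  rw [aeval_def, eval₂_eq]
  refine (totalDegree_finset_sum _ _).trans (Finset.sup_le fun d hd => ?_)
  refine (totalDegree_mul _ _).trans ?_
  rw [algebraMap_eq, totalDegree_C, zero_add]
  refine le_trans ?_ (le_totalDegree hd)
  calc (∏ j ∈ d.support, sub1 i a j ^ d j).totalDegree
      ≤ ∑ j ∈ d.support, (sub1 i a j ^ d j).totalDegree := totalDegree_finset_prod _ _
    _ ≤ ∑ j ∈ d.support, d j := ?_
    _ = d.sum (fun _ e => e) := rfl
  refine Finset.sum_le_sum fun j _ => ?_
  have h1 : (sub1 i a j).totalDegree ≤ 1 := by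
    unfold sub1
    split_ifs
    · simp
    · simp [totalDegree_X]
  calc (sub1 i a j ^ d j).totalDegree ≤ d j * (sub1 i a j).totalDegree := totalDegree_pow _ _
    _ ≤ d j * 1 := Nat.mul_le_mul_left _ h1
    _ = d j := mul_one _

private lemma sub1_eval (i : Fin n) (a : K) (f : MvPolynomial (Fin n) K) (s : Fin n → K) :
    eval s (aeval (sub1 i a) f) = eval (Function.update s i a) f := by
  induction f using MvPolynomial.induction_on with
  | C c => simp [sub1]
  | add p q hp hq => rw [map_add, map_add, map_add, hp, hq]
  | mul_X p j hp =>
    rw [map_mul, aeval_X, map_mul, map_mul, hp, eval_X]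
    congr 1
    unfold sub1
    by_cases hj : j = i
    · subst hj; simp [Function.update_self]
    · simp [hj, Function.update_of_ne hj]

private lemma fsum_eq (d : Fin n →₀ ℕ) : d.sum (fun _ e => e) = ∑ j, d j :=
  Finsupp.sum_fintype _ _ (fun _ => rfl)

private lemma fsum_eq' (d : Fin n →₀ ℕ) : ∑ j ∈ d.support, d j = ∑ j, d j :=
  Finset.sum_subset (Finset.subset_univ _)
    (fun x _ hx => Finsupp.notMem_support_iff.mp hx)

private lemma cns_main : ∀ (k : ℕ) (S : Fin n → Finset K) (f : MvPolynomial (Fin n) K)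
    (α : Fin n →₀ ℕ), MvPolynomial.coeff α f ≠ 0 → (∀ i, α i < (S i).card) →
    f.totalDegree = ∑ i, α i → ∑ i, α i = k →
    ∃ s : Fin n → K, (∀ i, s i ∈ S i) ∧ MvPolynomial.eval s f ≠ 0 := by
  intro k
  induction k with
  | zero =>
    intro S f α hcoeff hlt hdeg hsum
    have hα : α = 0 := by
      ext j
      exact Finset.sum_eq_zero_iff.mp hsum j (Finset.mem_univ j)
    subst hα
    have hs : ∀ j, ∃ x, x ∈ S j := fun j =>
      Finset.Nonempty.exists_mem (Finset.card_pos.mp (Nat.pos_of_ne_zero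
        (fun h => by simpa [h] using hlt j)))
    choose s hs using hs
    refine ⟨s, hs, ?_⟩
    have hsupp : f.support = {0} := by
      apply Finset.eq_singleton_iff_unique_mem.mpr
      constructor
      · exact MvPolynomial.mem_support_iff.mpr hcoeff
      · intro d hd
        ext j
        have h2 := le_totalDegree hd
        have h0 : f.totalDegree = 0 := by rw [hdeg]; simp
        rw [h0, fsum_eq] at h2
        have := Finset.sum_eq_zero_iff.mp (Nat.le_zero.mp h2) j (Finset.mem_univ j)
        simpa using this
    rw [eval_eq, hsupp]
    simpa using hcoeff
  | succ k ih =>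
    intro S f α hcoeff hlt hdeg hsum
    classical
    -- pick i with α i ≠ 0
    obtain ⟨i, -, hi⟩ := Finset.exists_ne_zero_of_sum_ne_zero (by rw [hsum]; exact Nat.succ_ne_zero k)
    -- pick a ∈ S i
    obtain ⟨a, ha⟩ := Finset.card_pos.mp (lt_of_le_of_lt (Nat.zero_le _) (hlt i))
    obtain ⟨g, hg⟩ := sub1_dvd i a f
    set h : MvPolynomial (Fin n) K := aeval (sub1 i a) f with hh
    set β : Fin n →₀ ℕ := α - Finsupp.single i 1 with hβdef
    have hβα : Finsupp.single i 1 + β = α := by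
      have h1 : 1 ≤ α i := Nat.one_le_iff_ne_zero.mpr hi
      ext j
      rw [Finsupp.add_apply, hβdef, Finsupp.tsub_apply, Finsupp.single_apply]
      by_cases hj : i = j
      · subst hj; rw [if_pos rfl]; omega
      · rw [if_neg hj]; omega
    have hβi : ∀ j, β j = if j = i then α i - 1 else α j := by
      intro j
      rw [hβdef, Finsupp.tsub_apply, Finsupp.single_apply]
      by_cases hj : j = i
      · subst hj; rw [if_pos rfl, if_pos rfl]
      · rw [if_neg (fun h' => hj h'.symm), if_neg hj, Nat.sub_zero]
    have hsumβ : ∑ j, β j = k := by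
      have : ∑ j, α j = ∑ j, β j + ∑ j, (Finsupp.single i 1 : Fin n →₀ ℕ) j := by
        rw [← Finset.sum_add_distrib]
        refine Finset.sum_congr rfl fun j _ => ?_
        rw [← hβα]; simp [Finsupp.add_apply, add_comm]
      have hsing : ∑ j, (Finsupp.single i 1 : Fin n →₀ ℕ) j = 1 := by
        simp [Finsupp.single_apply]
      omega
    -- coefficient identity
    have hkey : coeff β g - a * coeff α g = coeff α f := by
      have h1 : coeff α ((X i - C a) * g) = coeff α f := by
        rw [← hg, coeff_sub, sub1_coeff i a f α hi, sub_zero]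
      rw [← h1, sub_mul, coeff_sub, ← hβα, coeff_X_mul, coeff_C_mul, hβα]
    -- g ≠ 0
    have hgne : g ≠ 0 := by
      intro h0
      rw [h0] at hkey
      simp at hkey
      exact hcoeff hkey.symm
    -- degree bound for g
    have hdegg : g.totalDegree ≤ k := by
      obtain ⟨β', hβ'mem, hβ'⟩ := Finset.exists_mem_eq_sup g.support
        (MvPolynomial.support_nonempty.mpr hgne) (fun d => d.sum fun _ e => e)
      have hdgβ' : g.totalDegree = β'.sum fun _ e => e := hβ'
      have hsum' : (Finsupp.single i 1 + β').sum (fun _ e => e) = 1 + g.totalDegree := by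
        rw [fsum_eq, hdgβ', fsum_eq]
        simp only [Finsupp.add_apply]
        rw [Finset.sum_add_distrib]
        simp [Finsupp.single_apply]
      have hz : coeff (Finsupp.single i 1 + β') g = 0 := by
        apply coeff_eq_zero_of_totalDegree_lt
        rw [fsum_eq']
        rw [fsum_eq] at hsum'
        omega
      have hc2 : coeff (Finsupp.single i 1 + β') ((X i - C a) * g) = coeff β' g := by
        rw [sub_mul, coeff_sub, coeff_X_mul, coeff_C_mul, hz, mul_zero, sub_zero]
      have hc3 : coeff (Finsupp.single i 1 + β') (f - h) ≠ 0 := by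
        rw [hg, hc2]
        exact MvPolynomial.mem_support_iff.mp hβ'mem
      have hle : (Finsupp.single i 1 + β').sum (fun _ e => e) ≤ (f - h).totalDegree :=
        le_totalDegree (MvPolynomial.mem_support_iff.mpr hc3)
      have hfh : (f - h).totalDegree ≤ k + 1 := by
        refine (totalDegree_sub f h).trans ?_
        refine max_le ?_ ?_
        · rw [hdeg, hsum]
        · exact (sub1_deg i a f).trans (by rw [hdeg, hsum])
      rw [fsum_eq] at hsum'
      rw [fsum_eq] at hle
      omega
    have hcoeffαg : coeff α g = 0 := by
      apply coeff_eq_zero_of_totalDegree_lt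
      rw [fsum_eq', hsum]
      omega
    have hcoeffβg : coeff β g ≠ 0 := by
      rw [hcoeffαg, mul_zero, sub_zero] at hkey
      rw [hkey]; exact hcoeff
    have hdegg' : g.totalDegree = ∑ j, β j := by
      refine le_antisymm (by omega) ?_
      have := le_totalDegree (MvPolynomial.mem_support_iff.mpr hcoeffβg)
      rwa [fsum_eq] at this
    -- smaller grid
    set S' : Fin n → Finset K := Function.update S i ((S i).erase a) with hS'
    have hltβ : ∀ j, β j < (S' j).card := by
      intro j
      by_cases hj : j = i
      · subst hj
        rw [hβi, if_pos rfl, hS', Function.update_self, Finset.card_erase_of_mem ha]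
        have := hlt j
        omega
      · rw [hβi, if_neg hj, hS', Function.update_of_ne hj]
        exact hlt j
    obtain ⟨s, hsmem, hsg⟩ := ih S' g β hcoeffβg hltβ hdegg' hsumβ
    have hsi : s i ∈ (S i).erase a := by
      have := hsmem i
      rwa [hS', Function.update_self] at this
    have hsia : s i ≠ a := (Finset.mem_erase.mp hsi).1
    have hsmem' : ∀ j, s j ∈ S j := by
      intro j
      by_cases hj : j = i
      · subst hj; exact (Finset.mem_erase.mp hsi).2
      · have := hsmem j
        rwa [hS', Function.update_of_ne hj] at this
    have heval : eval s f - eval s h = (s i - a) * eval s g := by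
      have := congrArg (eval s) hg
      simpa using this
    by_cases hfs : eval s f = 0
    · refine ⟨Function.update s i a, ?_, ?_⟩
      · intro j
        by_cases hj : j = i
        · subst hj; rw [Function.update_self]; exact ha
        · rw [Function.update_of_ne hj]; exact hsmem' j
      · rw [← sub1_eval i a f s, ← hh]
        intro h0
        rw [hfs, h0, sub_zero] at heval
        exact mul_ne_zero (sub_ne_zero_of_ne hsia) hsg heval.symm
    · exact ⟨s, hsmem', hfs⟩

end CNSAux

/-- Alon's Combinatorial Nullstellensatz. -/
theorem stmt_0 {K : Type*} [Field K] {n : ℕ} (hn : 1 ≤ n) (S : Fin n → Finset K)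
    (f : MvPolynomial (Fin n) K) (α : Fin n →₀ ℕ)
    (hcoeff : MvPolynomial.coeff α f ≠ 0)
    (hlt : ∀ i, α i < (S i).card)
    (hdeg : f.totalDegree = ∑ i, α i) :
    ∃ s : Fin n → K, (∀ i, s i ∈ S i) ∧ MvPolynomial.eval s f ≠ 0 :=
  cns_main (∑ i, α i) S f α hcoeff hlt hdeg rfl
end

section
/- Let K be a field and S = S₁ × ⋯ × Sₙ a grid over K. If f ∈ K[x₁,…,xₙ] has (α₁,…,αₙ) in its support with αᵢ < |Sᵢ| for all i, and (α₁,…,αₙ) is maximal in the support of f with respect to the coordinatewise partial order, then there exists s ∈ S with f(s) ≠ 0. -/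
open MvPolynomial Finsupp

-- auxiliary: total degree of an exponent vector
noncomputable def edeg {n : ℕ} (β : Fin n →₀ ℕ) : ℕ := ∑ j, β j

lemma edeg_add {n : ℕ} (a b : Fin n →₀ ℕ) : edeg (a + b) = edeg a + edeg b := by
  simp [edeg, Finset.sum_add_distrib]

lemma edeg_single {n : ℕ} (i : Fin n) (e : ℕ) : edeg (Finsupp.single i e) = e := by
  simp [edeg, Finsupp.single_apply]

lemma le_edeg {n : ℕ} (β : Fin n →₀ ℕ) (i : Fin n) : β i ≤ edeg β :=
  Finset.single_le_sum (f := fun j => β j) (fun _ _ => Nat.zero_le _) (Finset.mem_univ i)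



open MvPolynomial Polynomial in
lemma grid_lemma_aux {K : Type*} [Field K] : ∀ (n : ℕ) (S : Fin n → Finset K)
    (g : MvPolynomial (Fin n) K), (∀ i, g.degreeOf i < (S i).card) →
    (∀ s : Fin n → K, (∀ i, s i ∈ S i) → MvPolynomial.eval s g = 0) → g = 0 := by
  intro n
  induction n with
  | zero =>
    intro S g _ h
    have h0 := h (fun i => i.elim0) (fun i => i.elim0)
    rw [eq_C_of_isEmpty g] at h0 ⊢
    simpa using h0
  | succ n ih =>
    intro S g hdeg hvan
    have hp : ∀ i, (finSuccEquiv K n g).coeff i = 0 := by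
      intro i
      apply ih (fun j => S j.succ)
      · intro j
        exact lt_of_le_of_lt (degreeOf_coeff_finSuccEquiv g j i) (hdeg j.succ)
      · intro s hs
        have hq : (Polynomial.map (MvPolynomial.eval s) (finSuccEquiv K n g)) = 0 := by
          apply Polynomial.eq_zero_of_natDegree_lt_card_of_eval_eq_zero' _ (S 0)
          · intro y hy
            rw [← eval_eq_eval_mv_eval']
            refine hvan (Fin.cons y s) ?_
            intro j
            refine Fin.cases ?_ ?_ j
            · simpa using hy
            · intro k; simpa using hs k
          · calc (Polynomial.map (MvPolynomial.eval s) (finSuccEquiv K n g)).natDegree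
                ≤ (finSuccEquiv K n g).natDegree := Polynomial.natDegree_map_le
              _ = g.degreeOf 0 := natDegree_finSuccEquiv g
              _ < (S 0).card := hdeg 0
        have := congrArg (fun q => Polynomial.coeff q i) hq
        simpa [Polynomial.coeff_map] using this
    have hz : finSuccEquiv K n g = 0 := Polynomial.ext fun i => by simp [hp i]
    have := (map_eq_zero_iff _ (finSuccEquiv K n).injective).mp hz
    exact this

open MvPolynomial Finsupp in
lemma key_lemma {K : Type*} [Field K] {n : ℕ} (S : Fin n → Finset K) (α : Fin n →₀ ℕ)
    (hlt : ∀ i, α i < (S i).card) :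
    ∀ m : ℕ, ∀ f : MvPolynomial (Fin n) K,
      (∑ β ∈ f.support, ((Finset.univ.sup fun i => (S i).card) + 1) ^ edeg β) ≤ m →
      MvPolynomial.coeff α f ≠ 0 →
      (∀ β ∈ f.support, (∀ i, α i ≤ β i) → β = α) →
      ∃ s : Fin n → K, (∀ i, s i ∈ S i) ∧ MvPolynomial.eval s f ≠ 0 := by
  set N := (Finset.univ.sup fun i => (S i).card) + 1 with hN
  intro m
  induction m with
  | zero =>
    intro f hM hcα _
    exfalso
    have hαs : α ∈ f.support := MvPolynomial.mem_support_iff.mpr hcα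
    have h1 : 1 ≤ N ^ edeg α := Nat.one_le_pow _ _ (by omega)
    have h2 : N ^ edeg α ≤ ∑ β ∈ f.support, N ^ edeg β :=
      Finset.single_le_sum (f := fun β => N ^ edeg β) (fun _ _ => Nat.zero_le _) hαs
    omega
  | succ m ih =>
    intro f hM hcα hmax
    by_cases hbad : ∃ β ∈ f.support, ∃ i, (S i).card ≤ β i
    case neg =>
      push_neg at hbad
      have hf0 : f ≠ 0 := fun h => hcα (by simp [h])
      by_contra hcon
      push_neg at hcon
      apply hf0
      apply grid_lemma_aux n S f
      · intro i
        rw [MvPolynomial.degreeOf_lt_iff (Nat.lt_of_le_of_lt (Nat.zero_le _) (hlt i))]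
        intro β hβ
        exact hbad β hβ i
      · exact hcon
    case pos =>
      obtain ⟨β, hβsup, i, hi⟩ := hbad
      set d := (S i).card with hd
      have hd1 : 1 ≤ d := Nat.lt_of_le_of_lt (Nat.zero_le _) (hlt i)
      have hdN : d < N := Nat.lt_succ_of_le (Finset.le_sup (f := fun i => (S i).card) (Finset.mem_univ i))
      set c := MvPolynomial.coeff β f with hc
      have hc0 : c ≠ 0 := MvPolynomial.mem_support_iff.mp hβsup
      set P : Polynomial K := ∏ a ∈ S i, (Polynomial.X - Polynomial.C a) with hP
      have hPmono : ∀ a ∈ S i, (Polynomial.X - Polynomial.C a).Monic :=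
        fun a _ => Polynomial.monic_X_sub_C a
      have hPmonic : P.Monic := Polynomial.monic_prod_of_monic _ _ hPmono
      have hPdeg : P.natDegree = d := by
        rw [hP, Polynomial.natDegree_prod_of_monic _ _ hPmono]
        simp [hd]
      set β' := β - Finsupp.single i d with hβ'
      have hβsplit : β' + Finsupp.single i d = β := by
        ext j
        rcases eq_or_ne j i with rfl | hj
        · simp [hβ', Nat.sub_add_cancel hi]
        · simp [hβ', Finsupp.single_apply, Ne.symm hj]
      set g : MvPolynomial (Fin n) K := ∏ a ∈ S i, (MvPolynomial.X i - MvPolynomial.C a)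
        with hg
      have hgP : Polynomial.eval₂ MvPolynomial.C (MvPolynomial.X i) P = g := by
        rw [hP, hg, ← Polynomial.coe_eval₂RingHom, map_prod]
        simp
      have hgsum : (MvPolynomial.monomial β') c * g =
          ∑ e ∈ Finset.range (d + 1),
            (MvPolynomial.monomial (β' + Finsupp.single i e)) (c * P.coeff e) := by
        rw [← hgP, Polynomial.eval₂_eq_sum_range, hPdeg, Finset.mul_sum]
        refine Finset.sum_congr rfl fun e _ => ?_
        rw [MvPolynomial.C_mul_X_pow_eq_monomial, MvPolynomial.monomial_mul]
      set f' := f - (MvPolynomial.monomial β') c * g with hf'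
      have hcoeff : ∀ γ, MvPolynomial.coeff γ f' = MvPolynomial.coeff γ f -
          ∑ e ∈ Finset.range (d + 1),
            (if β' + Finsupp.single i e = γ then c * P.coeff e else 0) := by
        intro γ
        rw [hf', MvPolynomial.coeff_sub, hgsum, MvPolynomial.coeff_sum]
        simp [MvPolynomial.coeff_monomial]
      have hmono_le : ∀ e, e ≤ d → ∀ j, (β' + Finsupp.single i e) j ≤ β j := by
        intro e he j
        rcases eq_or_ne j i with rfl | hj
        · simp only [hβ', Finsupp.add_apply, Finsupp.tsub_apply, Finsupp.single_eq_same]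
          omega
        · simp [hβ', Finsupp.single_apply, Ne.symm hj]
      have hnotα : ¬ (∀ j, α j ≤ β j) := by
        intro h
        have hβα := hmax β hβsup h
        rw [hβα] at hi
        exact absurd (hlt i) (not_lt.mpr hi)
      have hmono_ne_α : ∀ e, e ≤ d → β' + Finsupp.single i e ≠ α := by
        intro e he heq
        apply hnotα
        intro j
        calc α j = (β' + Finsupp.single i e) j := by rw [heq]
          _ ≤ β j := hmono_le e he j
      have hcoeffα : MvPolynomial.coeff α f' = MvPolynomial.coeff α f := by
        rw [hcoeff α, Finset.sum_eq_zero, sub_zero]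
        intro e he
        rw [if_neg (hmono_ne_α e (Nat.lt_succ_iff.mp (Finset.mem_range.mp he)))]
      have hinjd : ∀ e, e ≤ d → β' + Finsupp.single i e = β → e = d := by
        intro e he heq
        have h2 := congrArg (fun γ : Fin n →₀ ℕ => γ i) heq
        simp only [hβ', Finsupp.add_apply, Finsupp.tsub_apply, Finsupp.single_eq_same] at h2
        omega
      have hPcd : P.coeff d = 1 := by
        rw [← hPdeg]
        exact hPmonic.coeff_natDegree
      have hcoeffβ : MvPolynomial.coeff β f' = 0 := by
        rw [hcoeff β, Finset.sum_eq_single_of_mem d (Finset.self_mem_range_succ d)]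
        · rw [if_pos hβsplit, hPcd, mul_one, ← hc, sub_self]
        · intro e he hne
          rw [if_neg]
          intro heq
          exact hne (hinjd e (Nat.lt_succ_iff.mp (Finset.mem_range.mp he)) heq)
      have hcα' : MvPolynomial.coeff α f' ≠ 0 := by rw [hcoeffα]; exact hcα
      have hsupp' : f'.support ⊆ (f.support \ {β}) ∪
          (Finset.range d).image (fun e => β' + Finsupp.single i e) := by
        intro γ hγ
        have hγ0 : MvPolynomial.coeff γ f' ≠ 0 := MvPolynomial.mem_support_iff.mp hγ
        have hγβ : γ ≠ β := fun h => hγ0 (by rw [h]; exact hcoeffβ)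
        by_cases hγf : γ ∈ f.support
        · exact Finset.mem_union_left _ (Finset.mem_sdiff.mpr ⟨hγf, by simp [hγβ]⟩)
        · have hsum : ∑ e ∈ Finset.range (d + 1),
              (if β' + Finsupp.single i e = γ then c * P.coeff e else 0) ≠ 0 := by
            intro h0
            apply hγ0
            rw [hcoeff γ, MvPolynomial.notMem_support_iff.mp hγf, h0, sub_zero]
          obtain ⟨e, he, hene⟩ := Finset.exists_ne_zero_of_sum_ne_zero hsum
          have heq : β' + Finsupp.single i e = γ := by
            by_contra h; rw [if_neg h] at hene; exact hene rfl
          have hed : e ≤ d := Nat.lt_succ_iff.mp (Finset.mem_range.mp he)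
          have hedlt : e < d := lt_of_le_of_ne hed
            (fun h => hγβ (by rw [← heq, h, hβsplit]))
          exact Finset.mem_union_right _
            (Finset.mem_image.mpr ⟨e, Finset.mem_range.mpr hedlt, heq⟩)
      have hmax' : ∀ γ ∈ f'.support, (∀ j, α j ≤ γ j) → γ = α := by
        intro γ hγ hγα
        rcases Finset.mem_union.mp (hsupp' hγ) with h | h
        · exact hmax γ (Finset.mem_sdiff.mp h).1 hγα
        · obtain ⟨e, he, rfl⟩ := Finset.mem_image.mp h
          exact absurd (fun j => le_trans (hγα j)
            (hmono_le e (le_of_lt (Finset.mem_range.mp he)) j)) hnotα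
      -- measure decreases
      have hM' : (∑ γ ∈ f'.support, N ^ edeg γ) ≤ m := by
        set D := edeg β with hD
        have hdD : d ≤ D := le_trans hi (le_edeg β i)
        have hDβ' : edeg β' + d = D := by
          rw [hD, ← hβsplit, edeg_add, edeg_single]
        set X := N ^ (D - 1) with hX
        have hX1 : 1 ≤ X := Nat.one_le_pow _ _ (by omega)
        have hND : N ^ D = N * X := by
          rw [hX, ← pow_succ']
          congr 1
          omega
        set A := ∑ γ ∈ f.support \ {β}, N ^ edeg γ with hA
        have hMA : A + N ^ D = ∑ γ ∈ f.support, N ^ edeg γ :=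
          (Finset.sum_eq_sum_sdiff_singleton_add hβsup _).symm
        have himg : ∑ γ ∈ (Finset.range d).image (fun e => β' + Finsupp.single i e),
            N ^ edeg γ ≤ d * X := by
          rw [Finset.sum_image (fun e1 _ e2 _ h =>
            Finsupp.single_injective i (add_left_cancel h))]
          calc ∑ e ∈ Finset.range d, N ^ edeg (β' + Finsupp.single i e)
              ≤ ∑ _e ∈ Finset.range d, X := by
                refine Finset.sum_le_sum fun e he => ?_
                rw [edeg_add, edeg_single, hX]
                exact Nat.pow_le_pow_right (by omega)
                  (by have := Finset.mem_range.mp he; omega)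
            _ = d * X := by simp [mul_comm]
        have hsub : ∑ γ ∈ f'.support, N ^ edeg γ ≤ A + d * X := by
          calc ∑ γ ∈ f'.support, N ^ edeg γ
              ≤ ∑ γ ∈ ((f.support \ {β}) ∪
                  (Finset.range d).image (fun e => β' + Finsupp.single i e)), N ^ edeg γ :=
                Finset.sum_le_sum_of_subset hsupp'
            _ = ∑ γ ∈ ((f.support \ {β}) ∪
                  ((Finset.range d).image (fun e => β' + Finsupp.single i e) \
                    (f.support \ {β}))), N ^ edeg γ := by
                rw [Finset.union_sdiff_self_eq_union]
            _ = A + ∑ γ ∈ ((Finset.range d).image (fun e => β' + Finsupp.single i e) \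
                  (f.support \ {β})), N ^ edeg γ := Finset.sum_union Finset.disjoint_sdiff
            _ ≤ A + d * X := add_le_add le_rfl
                (le_trans (Finset.sum_le_sum_of_subset Finset.sdiff_subset) himg)
        have hlast : d * X + 1 ≤ N * X := by nlinarith
        omega
      obtain ⟨s, hs, hne⟩ := ih f' hM' hcα' hmax'
      refine ⟨s, hs, ?_⟩
      have hevalg : MvPolynomial.eval s g = 0 := by
        rw [hg, map_prod]
        exact Finset.prod_eq_zero (hs i) (by simp)
      have heq : MvPolynomial.eval s f' = MvPolynomial.eval s f := by
        rw [hf', map_sub, map_mul, hevalg, mul_zero, sub_zero]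
      rw [← heq]
      exact hne

/-- Lasoń's generalization of the Combinatorial Nullstellensatz. -/
theorem stmt_1 {K : Type*} [Field K] {n : ℕ} (S : Fin n → Finset K)
    (f : MvPolynomial (Fin n) K) (α : Fin n →₀ ℕ)
    (hα : α ∈ f.support)
    (hlt : ∀ i, α i < (S i).card)
    (hmax : ∀ β ∈ f.support, (∀ i, α i ≤ β i) → β = α) :
    ∃ s : Fin n → K, (∀ i, s i ∈ S i) ∧ MvPolynomial.eval s f ≠ 0 := by
  exact key_lemma S α hlt _ f le_rfl (MvPolynomial.mem_support_iff.mp hα) hmax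
end

section
/- Let K be a field and for each i let Sᵢ ⊆ K be finite and λᵢ-null, S = S₁ × ⋯ × Sₙ. Suppose f ∈ K[x₁,…,xₙ] contains the monomial x^α with αᵢ < |Sᵢ| for all i, and for every other monomial x^γ appearing in f there exists i with γᵢ ∈ [0,αᵢ−1] ∪ [αᵢ+1,|Sᵢ|−1] ∪ [|Sᵢ|, αᵢ+λᵢ]. Then there exists s ∈ S with f(s) ≠ 0. -/
open Polynomial in
lemma onevar {K : Type*} [Field K] (g : Polynomial K) (d lam : ℕ) (hmonic : g.Monic)
    (hdeg : g.natDegree = d)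
    (hnull : ∀ b, d - lam ≤ b → b < d → g.coeff b = 0) (e : ℕ) :
    ∃ r : Polynomial K, X ^ e - r ∈ Ideal.span {g} ∧
      (∀ b ∈ r.support, b < d) ∧ (e < d → r = X ^ e) ∧
      (d ≤ e → ∀ b ∈ r.support, b + lam + 1 ≤ e) := by
  induction e using Nat.strong_induction_on with
  | _ e IH =>
  by_cases hed : e < d
  · refine ⟨X ^ e, by simp, ?_, fun _ => rfl, fun h => absurd h (by omega)⟩
    intro b hb
    rw [Polynomial.mem_support_iff, Polynomial.coeff_X_pow] at hb
    have : b = e := by by_contra h; simp [h] at hb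
    omega
  · push_neg at hed
    set h : Polynomial K := X ^ d - g with hh
    have hsupp : ∀ b ∈ h.support, b + lam + 1 ≤ d := by
      intro b hb
      rw [Polynomial.mem_support_iff] at hb
      have hcb : h.coeff b = (if d = b then (1:K) else 0) - g.coeff b := by
        simp [hh, Polynomial.coeff_X_pow, eq_comm]
      rcases lt_trichotomy b d with hbd | rfl | hbd
      · by_contra hcon
        have : d - lam ≤ b := by omega
        rw [hcb, hnull b this hbd, if_neg (by omega)] at hb
        simp at hb
      · rw [hcb, if_pos rfl] at hb
        have : g.coeff b = 1 := by
          have := hmonic.coeff_natDegree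
          rwa [hdeg] at this
        simp [this] at hb
      · rw [hcb, if_neg (by omega), Polynomial.coeff_eq_zero_of_natDegree_lt (by omega)] at hb
        simp at hb
    have key : ∀ b ∈ h.support, ∃ r : Polynomial K,
        X ^ (e - d + b) - r ∈ Ideal.span {g} ∧
        (∀ b' ∈ r.support, b' < d) ∧ (e - d + b < d → r = X ^ (e - d + b)) ∧
        (d ≤ e - d + b → ∀ b' ∈ r.support, b' + lam + 1 ≤ e - d + b) := by
      intro b hb
      exact IH (e - d + b) (by have := hsupp b hb; omega)
    choose R hR1 hR2 hR3 hR4 using key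
    refine ⟨∑ b ∈ h.support.attach, C (h.coeff b.1) * R b.1 b.2, ?_, ?_, ?_, ?_⟩
    · have hid : X ^ e - ∑ b ∈ h.support.attach, C (h.coeff b.1) * R b.1 b.2 =
          X ^ (e - d) * g +
          ∑ b ∈ h.support.attach, C (h.coeff b.1) * (X ^ (e - d + b.1) - R b.1 b.2) := by
        have hsum : ∑ b ∈ h.support.attach, C (h.coeff b.1) * (X:Polynomial K) ^ (e - d + b.1)
            = X ^ (e - d) * h := by
          conv_rhs => rw [h.as_sum_support]
          rw [Finset.mul_sum, ← Finset.sum_attach h.support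
            (fun b => (X:Polynomial K) ^ (e-d) * Polynomial.monomial b (h.coeff b))]
          refine Finset.sum_congr rfl fun b _ => ?_
          rw [← Polynomial.C_mul_X_pow_eq_monomial, pow_add]; ring
        have hgh : X ^ (e-d) * g + X ^ (e-d) * h = X ^ e := by
          rw [hh]; rw [← mul_add]; ring_nf
          rw [← pow_add]
          congr 1
          omega
        calc X ^ e - ∑ b ∈ h.support.attach, C (h.coeff b.1) * R b.1 b.2
            = X ^ (e - d) * g + ((∑ b ∈ h.support.attach, C (h.coeff b.1) * X ^ (e - d + b.1))
              - ∑ b ∈ h.support.attach, C (h.coeff b.1) * R b.1 b.2) := by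
              rw [hsum, ← hgh]; ring
          _ = _ := by rw [← Finset.sum_sub_distrib]; congr 1; refine Finset.sum_congr rfl ?_
                      intro b _; ring
      rw [hid]
      refine Ideal.add_mem _ ?_ (Ideal.sum_mem _ fun b _ => ?_)
      · exact Ideal.mul_mem_left _ _ (Ideal.subset_span rfl)
      · exact Ideal.mul_mem_left _ _ (hR1 b.1 b.2)
    · intro b' hb'
      rw [Polynomial.mem_support_iff, Polynomial.finset_sum_coeff] at hb'
      obtain ⟨b, _, hbne⟩ := Finset.exists_ne_zero_of_sum_ne_zero hb'
      rw [Polynomial.coeff_C_mul] at hbne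
      have : b' ∈ (R b.1 b.2).support := by
        rw [Polynomial.mem_support_iff]; intro hz; rw [hz, mul_zero] at hbne; exact hbne rfl
      exact hR2 b.1 b.2 b' this
    · omega
    · intro _ b' hb'
      rw [Polynomial.mem_support_iff, Polynomial.finset_sum_coeff] at hb'
      obtain ⟨b, _, hbne⟩ := Finset.exists_ne_zero_of_sum_ne_zero hb'
      rw [Polynomial.coeff_C_mul] at hbne
      have hmem : b' ∈ (R b.1 b.2).support := by
        rw [Polynomial.mem_support_iff]; intro hz; rw [hz, mul_zero] at hbne; exact hbne rfl
      have hbd := hsupp b.1 b.2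
      by_cases hcase : e - d + b.1 < d
      · have := hR3 b.1 b.2 hcase
        rw [this, Polynomial.mem_support_iff, Polynomial.coeff_X_pow] at hmem
        have : b' = e - d + b.1 := by by_contra hne; simp [hne] at hmem
        omega
      · have := hR4 b.1 b.2 (by omega) b' hmem
        omega

open MvPolynomial in
lemma box_zero {K : Type*} [Field K] : ∀ (n : ℕ) (S : Fin n → Finset K)
    (p : MvPolynomial (Fin n) K),
    (∀ γ ∈ p.support, ∀ i, γ i < (S i).card) →
    (∀ s : Fin n → K, (∀ i, s i ∈ S i) → MvPolynomial.eval s p = 0) → p = 0 := by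
  intro n
  induction n with
  | zero =>
    intro S p _ hvan
    obtain ⟨c, rfl⟩ := MvPolynomial.C_surjective (Fin 0) p
    have := hvan (fun i => i.elim0) (fun i => i.elim0)
    rw [MvPolynomial.eval_C] at this
    rw [this, map_zero]
  | succ n IH =>
    intro S p hsupp hvan
    by_cases hp : p = 0
    · exact hp
    exfalso
    have hq : finSuccEquiv K n p = 0 := by
      ext i m
      rw [Polynomial.coeff_zero, MvPolynomial.coeff_zero]
      have : (finSuccEquiv K n p).coeff i = 0 := by
        apply IH (fun j => S j.succ)
        · intro m hm j
          rw [MvPolynomial.mem_support_coeff_finSuccEquiv] at hm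
          have := hsupp _ hm j.succ
          rwa [Finsupp.cons_succ] at this
        · intro s hs
          have hmap : Polynomial.map (MvPolynomial.eval s) (finSuccEquiv K n p) = 0 := by
            apply Polynomial.eq_zero_of_natDegree_lt_card_of_eval_eq_zero' _ (S 0)
            · intro y hy
              rw [← MvPolynomial.eval_eq_eval_mv_eval']
              apply hvan
              intro i
              refine Fin.cases ?_ ?_ i
              · simpa using hy
              · intro j; simpa using hs j
            · calc (Polynomial.map (MvPolynomial.eval s) (finSuccEquiv K n p)).natDegree
                  ≤ (finSuccEquiv K n p).natDegree := Polynomial.natDegree_map_le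
                _ = p.degreeOf 0 := MvPolynomial.natDegree_finSuccEquiv p
                _ < (S 0).card := by
                    rw [MvPolynomial.degreeOf_lt_iff]
                    · intro m hm; exact hsupp m hm 0
                    · obtain ⟨γ, hγ⟩ := MvPolynomial.support_nonempty.mpr hp
                      have := hsupp γ hγ 0
                      omega
          calc MvPolynomial.eval s ((finSuccEquiv K n p).coeff i)
              = (Polynomial.map (MvPolynomial.eval s) (finSuccEquiv K n p)).coeff i := by
                rw [Polynomial.coeff_map]
            _ = 0 := by rw [hmap, Polynomial.coeff_zero]
      rw [this, MvPolynomial.coeff_zero]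
    exact hp ((map_eq_zero_iff _ (finSuccEquiv K n).injective).mp hq)

lemma box_ne {K : Type*} [Field K] {n : ℕ} (S : Fin n → Finset K)
    (p : MvPolynomial (Fin n) K) (hp : p ≠ 0)
    (hsupp : ∀ γ ∈ p.support, ∀ i, γ i < (S i).card) :
    ∃ s : Fin n → K, (∀ i, s i ∈ S i) ∧ MvPolynomial.eval s p ≠ 0 := by
  by_contra hcon
  push_neg at hcon
  exact hp (box_zero n S p hsupp hcon)

open MvPolynomial in
lemma aeval_X_support {K : Type*} [Field K] {n : ℕ} (j : Fin n) (p : Polynomial K)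
    (δ : Fin n →₀ ℕ) (hδ : δ ∈ (Polynomial.aeval (X j : MvPolynomial (Fin n) K) p).support) :
    ∃ b ∈ p.support, δ = Finsupp.single j b := by
  rw [MvPolynomial.mem_support_iff] at hδ
  have hrw : Polynomial.aeval (X j : MvPolynomial (Fin n) K) p =
      ∑ b ∈ p.support, monomial (Finsupp.single j b) (p.coeff b) := by
    rw [Polynomial.aeval_def, Polynomial.eval₂_eq_sum, Polynomial.sum_def]
    refine Finset.sum_congr rfl fun b _ => ?_
    rw [MvPolynomial.X_pow_eq_monomial]
    simp [MvPolynomial.algebraMap_eq, MvPolynomial.C_mul_monomial]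
  rw [hrw, MvPolynomial.coeff_sum] at hδ
  obtain ⟨b, hb, hbne⟩ := Finset.exists_ne_zero_of_sum_ne_zero hδ
  refine ⟨b, hb, ?_⟩
  rw [MvPolynomial.coeff_monomial] at hbne
  by_contra hne
  simp [Ne.symm hne] at hbne

open MvPolynomial in
lemma prod_aeval_support {K : Type*} [Field K] {n : ℕ} (p : Fin n → Polynomial K)
    (t : Finset (Fin n)) :
    ∀ β ∈ (∏ j ∈ t, Polynomial.aeval (X j : MvPolynomial (Fin n) K) (p j)).support,
      (∀ j ∈ t, β j ∈ (p j).support) ∧ (∀ j ∉ t, β j = 0) := by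
  classical
  induction t using Finset.induction_on with
  | empty =>
    intro β hβ
    rw [Finset.prod_empty] at hβ
    have : β = 0 := by
      rw [MvPolynomial.mem_support_iff] at hβ
      by_contra hne
      rw [MvPolynomial.coeff_one, if_neg (by exact fun h => hne h.symm)] at hβ
      exact hβ rfl
    simp [this]
  | @insert j s hj IH =>
    intro β hβ
    rw [Finset.prod_insert hj] at hβ
    have hβ' := MvPolynomial.support_mul _ _ hβ
    rw [Finset.mem_add] at hβ'
    obtain ⟨β₁, hβ₁, β₂, hβ₂, rfl⟩ := hβ'
    obtain ⟨b, hb, rfl⟩ := aeval_X_support j (p j) β₁ hβ₁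
    obtain ⟨h1, h2⟩ := IH β₂ hβ₂
    constructor
    · intro j' hj'
      rcases Finset.mem_insert.mp hj' with rfl | hj's
      · rw [Finsupp.add_apply, Finsupp.single_eq_same, h2 j' hj, add_zero]; exact hb
      · rw [Finsupp.add_apply, Finsupp.single_eq_of_ne' (fun h : j = j' => hj (h ▸ hj's)), zero_add]
        exact h1 j' hj's
    · intro j' hj'
      rw [Finset.mem_insert, not_or] at hj'
      rw [Finsupp.add_apply, Finsupp.single_eq_of_ne' (fun h => hj'.1 h.symm), zero_add]
      exact h2 j' hj'.2


open MvPolynomial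

/-- Structured Nullstellensatz using conditions on the monomials. -/
theorem stmt_2 {K : Type*} [Field K] {n : ℕ} (S : Fin n → Finset K) (lam : Fin n → ℕ)
    (hnull : ∀ i, IsNull (lam i) (S i))
    (f : MvPolynomial (Fin n) K) (α : Fin n →₀ ℕ)
    (hα : α ∈ f.support)
    (hlt : ∀ i, α i < (S i).card)
    (hmon : ∀ γ ∈ f.support, γ ≠ α → ∃ i,
      γ i < α i ∨ (α i < γ i ∧ γ i < (S i).card) ∨
      ((S i).card ≤ γ i ∧ γ i ≤ α i + lam i)) :
    ∃ s : Fin n → K, (∀ i, s i ∈ S i) ∧ MvPolynomial.eval s f ≠ 0 := by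
  classical
  set g : Fin n → Polynomial K := fun i => ∏ a ∈ S i, (Polynomial.X - Polynomial.C a) with hg
  have hmonic : ∀ i, (g i).Monic := fun i =>
    Polynomial.monic_prod_of_monic _ _ fun a _ => Polynomial.monic_X_sub_C a
  have hdeg : ∀ i, (g i).natDegree = (S i).card := by
    intro i
    rw [hg, Polynomial.natDegree_prod_of_monic _ _ fun a _ => Polynomial.monic_X_sub_C a]
    simp [Polynomial.natDegree_X_sub_C]
  have hone : ∀ (i : Fin n) (e : ℕ), ∃ rr : Polynomial K,
      Polynomial.X ^ e - rr ∈ Ideal.span {g i} ∧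
      (∀ b ∈ rr.support, b < (S i).card) ∧ (e < (S i).card → rr = Polynomial.X ^ e) ∧
      ((S i).card ≤ e → ∀ b ∈ rr.support, b + lam i + 1 ≤ e) :=
    fun i e => onevar (g i) ((S i).card) (lam i) (hmonic i) (hdeg i) (hnull i) e
  choose r hr1 hr2 hr3 hr4 using hone
  set G : Fin n → MvPolynomial (Fin n) K :=
    fun i => Polynomial.aeval (X i : MvPolynomial (Fin n) K) (g i) with hGdef
  set I : Ideal (MvPolynomial (Fin n) K) := Ideal.span (Set.range G) with hI
  have hGI : ∀ (i : Fin n) (p : Polynomial K), p ∈ Ideal.span {g i} →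
      Polynomial.aeval (X i : MvPolynomial (Fin n) K) p ∈ I := by
    intro i p hp
    rw [Ideal.mem_span_singleton] at hp
    obtain ⟨q, rfl⟩ := hp
    rw [map_mul]
    exact Ideal.mul_mem_right _ _ (Ideal.subset_span ⟨i, rfl⟩)
  -- the reduction h γ
  set hred : (Fin n →₀ ℕ) → MvPolynomial (Fin n) K :=
    fun γ => ∏ j : Fin n, Polynomial.aeval (X j : MvPolynomial (Fin n) K) (r j (γ j))
    with hhred
  have hprodX : ∀ γ : Fin n →₀ ℕ,
      (∏ j : Fin n, (X j : MvPolynomial (Fin n) K) ^ γ j) = monomial γ 1 := by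
    intro γ
    rw [← MvPolynomial.prod_X_pow_eq_monomial]
    exact (Finset.prod_subset (Finset.subset_univ _) fun x _ hx => by
      rw [Finsupp.notMem_support_iff.mp hx, pow_zero]).symm
  have hcong : ∀ γ : Fin n →₀ ℕ, (monomial γ (1:K)) - hred γ ∈ I := by
    intro γ
    refine (Ideal.Quotient.eq).mp ?_
    rw [← hprodX γ, hhred, map_prod, map_prod]
    refine Finset.prod_congr rfl fun j _ => ?_
    refine (Ideal.Quotient.eq).mpr ?_
    have : (X j : MvPolynomial (Fin n) K) ^ γ j =
        Polynomial.aeval (X j : MvPolynomial (Fin n) K) ((Polynomial.X : Polynomial K) ^ γ j) := by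
      rw [map_pow, Polynomial.aeval_X]
    rw [this, ← map_sub]
    exact hGI j _ (hr1 j (γ j))
  set f' : MvPolynomial (Fin n) K :=
    ∑ γ ∈ f.support, MvPolynomial.C (f.coeff γ) * hred γ with hf'
  have hfI : f - f' ∈ I := by
    nth_rewrite 1 [← f.support_sum_monomial_coeff]
    rw [hf', ← Finset.sum_sub_distrib]
    refine Ideal.sum_mem _ fun γ _ => ?_
    have : (monomial γ (f.coeff γ)) - MvPolynomial.C (f.coeff γ) * hred γ =
        MvPolynomial.C (f.coeff γ) * ((monomial γ 1) - hred γ) := by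
      rw [mul_sub, MvPolynomial.C_mul_monomial, mul_one]
    rw [this]
    exact Ideal.mul_mem_left _ _ (hcong γ)
  -- coefficient of α in hred γ, for γ ≠ α in support
  have hredcoeff0 : ∀ γ ∈ f.support, γ ≠ α → MvPolynomial.coeff α (hred γ) = 0 := by
    intro γ hγ hne
    obtain ⟨i, hi⟩ := hmon γ hγ hne
    by_contra hc
    have hαmem : α ∈ (hred γ).support := MvPolynomial.mem_support_iff.mpr hc
    have hmemi : (α : Fin n →₀ ℕ) i ∈ (r i (γ i)).support :=
      (prod_aeval_support (fun j => r j (γ j)) Finset.univ α hαmem).1 i (Finset.mem_univ i)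
    rcases hi with h1 | h2 | h3
    · have : γ i < (S i).card := lt_trans h1 (hlt i)
      rw [hr3 i (γ i) this, Polynomial.mem_support_iff, Polynomial.coeff_X_pow] at hmemi
      have : α i = γ i := by by_contra hne'; simp [hne'] at hmemi
      omega
    · rw [hr3 i (γ i) h2.2, Polynomial.mem_support_iff, Polynomial.coeff_X_pow] at hmemi
      have : α i = γ i := by by_contra hne'; simp [hne'] at hmemi
      omega
    · have := hr4 i (γ i) h3.1 (α i) hmemi
      omega
  have hredα : MvPolynomial.coeff α (hred α) = 1 := by
    have : hred α = monomial α 1 := by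
      rw [hhred, ← hprodX α]
      refine Finset.prod_congr rfl fun j _ => ?_
      rw [hr3 j (α j) (hlt j), map_pow, Polynomial.aeval_X]
    rw [this, MvPolynomial.coeff_monomial, if_pos rfl]
  have hf'α : MvPolynomial.coeff α f' = MvPolynomial.coeff α f := by
    rw [hf', MvPolynomial.coeff_sum]
    rw [Finset.sum_eq_single_of_mem α hα]
    · rw [MvPolynomial.coeff_C_mul, hredα, mul_one]
    · intro γ hγ hne
      rw [MvPolynomial.coeff_C_mul, hredcoeff0 γ hγ hne, mul_zero]
  have hf'ne : f' ≠ 0 := by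
    intro h
    rw [h, MvPolynomial.coeff_zero] at hf'α
    exact MvPolynomial.mem_support_iff.mp hα hf'α.symm
  have hbox : ∀ β ∈ f'.support, ∀ i, β i < (S i).card := by
    intro β hβ i
    rw [MvPolynomial.mem_support_iff, hf', MvPolynomial.coeff_sum] at hβ
    obtain ⟨γ, _, hγne⟩ := Finset.exists_ne_zero_of_sum_ne_zero hβ
    rw [MvPolynomial.coeff_C_mul] at hγne
    have : β ∈ (hred γ).support := by
      rw [MvPolynomial.mem_support_iff]
      intro hz; rw [hz, mul_zero] at hγne; exact hγne rfl
    have hmemi : β i ∈ (r i (γ i)).support :=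
      (prod_aeval_support (fun j => r j (γ j)) Finset.univ β this).1 i (Finset.mem_univ i)
    exact hr2 i (γ i) (β i) hmemi
  obtain ⟨s, hs, hne⟩ := box_ne S f' hf'ne hbox
  refine ⟨s, hs, ?_⟩
  have hvan : MvPolynomial.eval s (f - f') = 0 := by
    have haeq : ∀ p : MvPolynomial (Fin n) K,
        MvPolynomial.aeval s p = MvPolynomial.eval s p := by
      intro p
      rw [MvPolynomial.aeval_def, Algebra.algebraMap_self, MvPolynomial.eval₂_id]
    have hker : ∀ i, MvPolynomial.eval s (G i) = 0 := by
      intro i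
      rw [← haeq, hGdef]
      show (MvPolynomial.aeval s) (Polynomial.aeval (X i : MvPolynomial (Fin n) K) (g i)) = 0
      rw [← Polynomial.aeval_algHom_apply (MvPolynomial.aeval s), MvPolynomial.aeval_X,
        Polynomial.coe_aeval_eq_eval, hg]
      rw [Polynomial.eval_prod]
      refine Finset.prod_eq_zero (hs i) ?_
      simp
    have : I ≤ RingHom.ker (MvPolynomial.eval s) := by
      rw [hI, Ideal.span_le]
      rintro x ⟨i, rfl⟩
      exact hker i
    exact this hfI
  rw [map_sub, sub_eq_zero] at hvan
  rw [hvan]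
  exact hne
end

section
/- Let K be a field, λ ∈ ℕ₀, and let each Sᵢ ⊆ K be a finite λ-null set, S = S₁ × ⋯ × Sₙ. Suppose f ∈ K[x₁,…,xₙ] contains the monomial x^α with αᵢ < |Sᵢ| for all i, and α₁ + ⋯ + αₙ ≥ deg(f) − λ. Then there exists s ∈ S with f(s) ≠ 0. -/
namespace NicaAux

section Univariate
open Polynomial
variable {K : Type*} [Field K]

lemma P_monic (A : Finset K) : (∏ a ∈ A, (X - C a)).Monic :=
  monic_prod_of_monic _ _ fun a _ => monic_X_sub_C a

lemma P_natDegree (A : Finset K) : (∏ a ∈ A, (X - C a)).natDegree = A.card := by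
  rw [natDegree_prod_of_monic _ _ fun a _ => monic_X_sub_C a]
  simp [natDegree_X_sub_C]

lemma Q_coeff {lam : ℕ} {A : Finset K} (h : IsNull lam A) (b : ℕ) (hb : A.card ≤ b + lam) :
    (X ^ A.card - ∏ a ∈ A, (X - C a)).coeff b = 0 := by
  rw [coeff_sub, coeff_X_pow]
  rcases lt_trichotomy b A.card with hlt | heq | hgt
  · rw [if_neg hlt.ne, h b (by omega) hlt, sub_zero]
  · rw [if_pos heq, heq]
    have : (∏ a ∈ A, (X - C a)).coeff A.card = 1 := by
      have := (P_monic A).coeff_natDegree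
      rwa [P_natDegree A] at this
    rw [this, sub_self]
  · rw [if_neg (by omega), coeff_eq_zero_of_natDegree_lt (by rw [P_natDegree]; omega), sub_zero]

lemma Q_natDegree {lam : ℕ} {A : Finset K} (h : IsNull lam A)
    (hQ : (X ^ A.card - ∏ a ∈ A, (X - C a)) ≠ 0) :
    (X ^ A.card - ∏ a ∈ A, (X - C a)).natDegree + lam + 1 ≤ A.card := by
  by_contra hc
  exact (leadingCoeff_ne_zero.mpr hQ) (Q_coeff h _ (by omega))

end Univariate

section Multivariate
open MvPolynomial
variable {K : Type*} [Field K]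


/-- coefficient of a sum of monomials over a finset of exponents. -/
lemma coeff_sum_monomial {n : ℕ} (s : Finset (Fin n →₀ ℕ)) (c : (Fin n →₀ ℕ) → K)
    (γ : Fin n →₀ ℕ) :
    MvPolynomial.coeff γ (∑ β ∈ s, MvPolynomial.monomial β (c β)) =
      if γ ∈ s then c γ else 0 := by
  rw [MvPolynomial.coeff_sum]
  simp_rw [MvPolynomial.coeff_monomial]
  exact Finset.sum_ite_eq' s γ c

lemma weight_le_totalDegree {n : ℕ} {f : MvPolynomial (Fin n) K} {β : Fin n →₀ ℕ}
    (h : β ∈ f.support) : (∑ i, β i) ≤ f.totalDegree := by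
  have := MvPolynomial.le_totalDegree h
  rwa [Finsupp.sum_fintype _ _ (fun _ => rfl)] at this

lemma coeff_eq_zero_of_lt {n : ℕ} {f : MvPolynomial (Fin n) K} {γ : Fin n →₀ ℕ}
    (h : f.totalDegree < ∑ i, γ i) : MvPolynomial.coeff γ f = 0 := by
  by_contra hc
  exact absurd (weight_le_totalDegree (MvPolynomial.mem_support_iff.mpr hc)) (not_le.mpr h)

lemma totalDegree_aeval_X {n : ℕ} (u : Polynomial K) (i : Fin n) :
    (Polynomial.aeval (MvPolynomial.X i : MvPolynomial (Fin n) K) u).totalDegree ≤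
      u.natDegree := by
  rw [Polynomial.aeval_def, Polynomial.eval₂_eq_sum, Polynomial.sum]
  refine (MvPolynomial.totalDegree_finset_sum _ _).trans (Finset.sup_le fun b hb => ?_)
  calc (algebraMap K (MvPolynomial (Fin n) K) (u.coeff b) *
          (MvPolynomial.X i : MvPolynomial (Fin n) K) ^ b).totalDegree
      ≤ (algebraMap K (MvPolynomial (Fin n) K) (u.coeff b)).totalDegree +
          ((MvPolynomial.X i : MvPolynomial (Fin n) K) ^ b).totalDegree :=
        MvPolynomial.totalDegree_mul _ _
    _ ≤ 0 + b := by
        gcongr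
        · exact le_of_eq (MvPolynomial.totalDegree_C _)
        · exact (MvPolynomial.totalDegree_pow _ _).trans
            (by simp [MvPolynomial.totalDegree_X])
    _ ≤ u.natDegree := by
        simpa using Polynomial.le_natDegree_of_mem_supp b hb

/-- The grid lemma. -/
lemma grid_exists : ∀ {n : ℕ} (S : Fin n → Finset K) (r : MvPolynomial (Fin n) K),
    r ≠ 0 → (∀ i, r.degreeOf i < (S i).card) →
    ∃ s : Fin n → K, (∀ i, s i ∈ S i) ∧ MvPolynomial.eval s r ≠ 0 := by
  intro n
  induction n with
  | zero =>
    intro S r hr _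
    obtain ⟨c, rfl⟩ := MvPolynomial.C_surjective (Fin 0) r
    exact ⟨Fin.elim0, fun i => i.elim0, by
      simpa using fun h => hr (by rw [h, map_zero])⟩
  | succ n IH =>
    intro S r hr hdeg
    set F := MvPolynomial.finSuccEquiv K n r with hF
    have hF0 : F ≠ 0 := by
      simp only [hF, ne_eq, EmbeddingLike.map_eq_zero_iff]
      exact hr
    have hlead : F.coeff F.natDegree ≠ 0 := Polynomial.leadingCoeff_ne_zero.mpr hF0
    obtain ⟨s', hs', hev⟩ := IH (fun i => S i.succ) (F.coeff F.natDegree) hlead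
      (fun i => lt_of_le_of_lt (MvPolynomial.degreeOf_coeff_finSuccEquiv r i F.natDegree)
        (hdeg i.succ))
    set G := F.map (MvPolynomial.eval s') with hG
    have hG0 : G ≠ 0 := fun h => hev (by
      have h2 : G.coeff F.natDegree = MvPolynomial.eval s' (F.coeff F.natDegree) :=
        Polynomial.coeff_map _ _
      rw [h, Polynomial.coeff_zero] at h2
      exact h2.symm)
    have hGdeg : G.natDegree < (S 0).card := by
      calc G.natDegree ≤ F.natDegree := Polynomial.natDegree_map_le
        _ = r.degreeOf 0 := MvPolynomial.natDegree_finSuccEquiv r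
        _ < (S 0).card := hdeg 0
    classical
    have : ∃ a ∈ S 0, Polynomial.eval a G ≠ 0 := by
      by_contra hcon
      push_neg at hcon
      have hsub : S 0 ⊆ G.roots.toFinset := by
        intro a ha
        rw [Multiset.mem_toFinset, Polynomial.mem_roots hG0]
        exact hcon a ha
      have := (Finset.card_le_card hsub).trans
        ((Multiset.toFinset_card_le _).trans (Polynomial.card_roots' G))
      omega
    obtain ⟨a, haS, haG⟩ := this
    refine ⟨Fin.cons a s', fun i => ?_, ?_⟩
    · refine Fin.cases ?_ ?_ i
      · simpa using haS
      · intro j; simpa using hs' j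
    · rw [MvPolynomial.eval_eq_eval_mv_eval']
      exact haG

lemma reduce {n : ℕ} (lam : ℕ) (S : Fin n → Finset K) (hnull : ∀ i, IsNull lam (S i))
    (hd1 : ∀ i, 1 ≤ (S i).card) :
    ∀ N : ℕ, ∀ f : MvPolynomial (Fin n) K, f.totalDegree ≤ N →
    ∃ r : MvPolynomial (Fin n) K,
      (∀ s : Fin n → K, (∀ i, s i ∈ S i) → eval s r = eval s f) ∧
      (∀ i, r.degreeOf i < (S i).card) ∧
      r.totalDegree ≤ N ∧
      (∀ γ : Fin n →₀ ℕ, (∀ i, γ i < (S i).card) → N ≤ (∑ i, γ i) + lam →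
        coeff γ r = coeff γ f) := by
  classical
  set d : Fin n → ℕ := fun i => (S i).card with hd
  set P : Fin n → Polynomial K := fun i => ∏ a ∈ S i, (Polynomial.X - Polynomial.C a)
    with hP
  set Q : Fin n → Polynomial K := fun i => Polynomial.X ^ d i - P i with hQ
  set g : Fin n → MvPolynomial (Fin n) K :=
    fun i => Polynomial.aeval (MvPolynomial.X i) (P i) with hg
  set q : Fin n → MvPolynomial (Fin n) K :=
    fun i => Polynomial.aeval (MvPolynomial.X i) (Q i) with hq
  have hgq : ∀ i, g i + q i = (MvPolynomial.X i : MvPolynomial (Fin n) K) ^ d i := by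
    intro i
    have h1 : P i + Q i = Polynomial.X ^ d i := by rw [hQ]; ring
    have := congrArg (Polynomial.aeval (MvPolynomial.X i : MvPolynomial (Fin n) K)) h1
    rw [map_add, map_pow, Polynomial.aeval_X] at this
    exact this
  have hgeval : ∀ (i : Fin n) (s : Fin n → K), s i ∈ S i → eval s (g i) = 0 := by
    intro i s hs
    have hgid : g i = ∏ a ∈ S i, (MvPolynomial.X i - MvPolynomial.C a) := by
      rw [hg, hP]
      simp only [map_prod, map_sub, Polynomial.aeval_X, Polynomial.aeval_C]
      rfl
    rw [hgid, map_prod]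
    refine Finset.prod_eq_zero hs ?_
    simp
  have hqdeg : ∀ i, Q i ≠ 0 → (q i).totalDegree + lam + 1 ≤ d i := by
    intro i hQi
    have h1 : (q i).totalDegree ≤ (Q i).natDegree := totalDegree_aeval_X (Q i) i
    have h2 : (Q i).natDegree + lam + 1 ≤ d i := Q_natDegree (hnull i) hQi
    omega
  intro N
  induction N using Nat.strong_induction_on with
  | _ N IH =>
    intro f hf
    set bad := f.support.filter (fun β => ∃ i, d i ≤ β i) with hbad
    set good := f.support.filter (fun β => ¬ ∃ i, d i ≤ β i) with hgood
    set fg := ∑ β ∈ good, monomial β (coeff β f) with hfg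
    have hkey : ∀ β ∈ bad, ∃ i, d i ≤ β i := fun β h => (Finset.mem_filter.mp h).2
    set ii : {x // x ∈ bad} → Fin n := fun β => (hkey β.1 β.2).choose with hii
    have hiile : ∀ β : {x // x ∈ bad}, d (ii β) ≤ β.1 (ii β) :=
      fun β => (hkey β.1 β.2).choose_spec
    set β' : {x // x ∈ bad} → (Fin n →₀ ℕ) :=
      fun β => β.1 - Finsupp.single (ii β) (d (ii β)) with hβ'
    have hspl : ∀ β : {x // x ∈ bad},
        Finsupp.single (ii β) (d (ii β)) + β' β = β.1 := by
      intro β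
      ext j
      rcases eq_or_ne j (ii β) with rfl | hne
      · simp only [Finsupp.add_apply, Finsupp.single_eq_same, hβ', Finsupp.tsub_apply]
        have := hiile β
        omega
      · simp [Finsupp.add_apply, Finsupp.single_eq_of_ne' (Ne.symm hne), hβ',
          Finsupp.tsub_apply]
    have hwβ' : ∀ β : {x // x ∈ bad}, (∑ j, β' β j) + d (ii β) = ∑ j, β.1 j := by
      intro β
      have := congrArg (fun γ : Fin n →₀ ℕ => ∑ j, γ j) (hspl β)
      simp only [Finsupp.add_apply, Finset.sum_add_distrib] at this
      rw [← this]
      have hsing : (∑ j, (Finsupp.single (ii β) (d (ii β)) : Fin n →₀ ℕ) j) = d (ii β) := by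
        simp [Finsupp.single_apply]
      omega
    set term : {x // x ∈ bad} → MvPolynomial (Fin n) K :=
      fun β => MvPolynomial.C (coeff β.1 f) * q (ii β) * monomial (β' β) 1 with hterm
    set p := ∑ β ∈ bad.attach, term β with hp
    -- termwise monomial decomposition
    have hmono : ∀ β : {x // x ∈ bad},
        monomial β.1 (coeff β.1 f) =
          MvPolynomial.C (coeff β.1 f) * g (ii β) * monomial (β' β) 1 + term β := by
      intro β
      rw [hterm]
      have : MvPolynomial.C (coeff β.1 f) * g (ii β) * monomial (β' β) 1 +
          MvPolynomial.C (coeff β.1 f) * q (ii β) * monomial (β' β) 1 =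
          MvPolynomial.C (coeff β.1 f) * (g (ii β) + q (ii β)) * monomial (β' β) 1 := by
        ring
      rw [this, hgq, X_pow_eq_monomial, C_mul_monomial, monomial_mul, hspl β, mul_one, mul_one]
    -- split f
    have hsplit0 : f = (∑ β ∈ bad, monomial β (coeff β f)) + fg := by
      conv_lhs => rw [f.as_sum]
      rw [← Finset.sum_filter_add_sum_filter_not f.support (fun β => ∃ i, d i ≤ β i)]
    have hsplit : f = (∑ β ∈ bad.attach, (MvPolynomial.C (coeff β.1 f) * g (ii β) *
        monomial (β' β) 1)) + p + fg := by
      conv_lhs => rw [hsplit0]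
      congr 1
      rw [← Finset.sum_attach bad (fun β => monomial β (coeff β f)), hp,
        ← Finset.sum_add_distrib]
      exact Finset.sum_congr rfl fun β _ => hmono β
    have hcoeff_good : ∀ γ : Fin n →₀ ℕ, (∀ i, γ i < d i) → coeff γ f = coeff γ fg := by
      intro γ hγ
      have hγbad : γ ∉ bad := by
        intro h
        obtain ⟨i, hi⟩ := (Finset.mem_filter.mp h).2
        exact absurd (hγ i) (not_lt.mpr hi)
      conv_lhs => rw [hsplit0]
      rw [coeff_add, coeff_sum_monomial, if_neg hγbad, zero_add]
    -- per-term degree bound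
    have htermdeg : ∀ β : {x // x ∈ bad}, (term β).totalDegree ≤ N - (lam + 1) := by
      intro β
      by_cases hQi : Q (ii β) = 0
      · have : q (ii β) = 0 := by rw [hq]; simp only; rw [hQi, map_zero]
        rw [hterm]; simp only [this, mul_zero, zero_mul, totalDegree_zero]
        omega
      · have h1 := hqdeg (ii β) hQi
        have h2 : (∑ j, β.1 j) ≤ N :=
          le_trans (weight_le_totalDegree (Finset.mem_filter.mp β.2).1) hf
        have h3 := hwβ' β
        have h4 : (term β).totalDegree ≤ (q (ii β)).totalDegree + ∑ j, β' β j := by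
          rw [hterm]
          refine le_trans (totalDegree_mul _ _) ?_
          have h5 : (MvPolynomial.C (coeff β.1 f) * q (ii β)).totalDegree ≤
              (q (ii β)).totalDegree := by
            refine le_trans (totalDegree_mul _ _) ?_
            simp [totalDegree_C]
          have h6 : (monomial (β' β) (1:K)).totalDegree ≤ ∑ j, β' β j := by
            by_cases h10 : (1:K) = 0
            · rw [h10]; simp
            · rw [totalDegree_monomial _ h10, Finsupp.sum_fintype _ _ (fun _ => rfl)]
          omega
        omega
    have hpdeg : p.totalDegree ≤ N - (lam + 1) := by
      rw [hp]
      exact MvPolynomial.totalDegree_finsetSum_le fun β _ => htermdeg β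
    -- fg facts
    have hfgcoeff : ∀ γ, coeff γ fg = if γ ∈ good then coeff γ f else 0 := by
      intro γ; rw [hfg, coeff_sum_monomial]
    have hfgdeg : ∀ j, fg.degreeOf j < d j := by
      intro j
      rw [degreeOf_lt_iff (hd1 j)]
      intro m hm
      have h1 : coeff m fg ≠ 0 := mem_support_iff.mp hm
      rw [hfgcoeff] at h1
      by_cases h2 : m ∈ good
      · have := (Finset.mem_filter.mp h2).2
        push_neg at this
        exact this j
      · simp [h2] at h1
    have hfgtot : fg.totalDegree ≤ N := by
      rw [hfg]
      refine MvPolynomial.totalDegree_finsetSum_le fun β hβ => ?_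
      by_cases hc : coeff β f = 0
      · simp [hc]
      · rw [totalDegree_monomial _ hc]
        exact le_trans (MvPolynomial.le_totalDegree (Finset.mem_filter.mp hβ).1) hf
    have hfgeval : ∀ s : Fin n → K, (∀ i, s i ∈ S i) →
        eval s f = eval s fg + eval s p := by
      intro s hs
      conv_lhs => rw [hsplit]
      rw [map_add, map_add]
      have hB : eval s (∑ β ∈ bad.attach, (MvPolynomial.C (coeff β.1 f) * g (ii β) *
          monomial (β' β) 1)) = 0 := by
        rw [map_sum]
        refine Finset.sum_eq_zero fun β _ => ?_
        rw [map_mul, map_mul, hgeval (ii β) s (hs (ii β))]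
        ring
      rw [hB]
      ring
    -- get reduced p
    by_cases hp0 : p = 0
    · refine ⟨fg, ?_, ?_, hfgtot, ?_⟩
      · intro s hs
        rw [hfgeval s hs, hp0, map_zero, add_zero]
      · exact hfgdeg
      · intro γ hγ _
        exact (hcoeff_good γ hγ).symm
    · -- p ≠ 0 : get lam + 1 ≤ N
      have hex : ∃ β ∈ bad.attach, term β ≠ 0 := by
        by_contra hcon
        push_neg at hcon
        exact hp0 (by rw [hp]; exact Finset.sum_eq_zero hcon)
      obtain ⟨β₀, _, hβ₀⟩ := hex
      have hQβ₀ : Q (ii β₀) ≠ 0 := by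
        intro hQi
        apply hβ₀
        have : q (ii β₀) = 0 := by rw [hq]; simp only; rw [hQi, map_zero]
        rw [hterm]; simp [this]
      have hlamN : lam + 1 ≤ N := by
        have h1 := hqdeg (ii β₀) hQβ₀
        have h2 : d (ii β₀) ≤ β₀.1 (ii β₀) := hiile β₀
        have h3 : β₀.1 (ii β₀) ≤ ∑ j, β₀.1 j :=
          Finset.single_le_sum (f := fun j => β₀.1 j) (fun _ _ => Nat.zero_le _)
            (Finset.mem_univ _)
        have h4 : (∑ j, β₀.1 j) ≤ N :=
          le_trans (weight_le_totalDegree (Finset.mem_filter.mp β₀.2).1) hf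
        omega
      obtain ⟨rp, hrp_eval, hrp_deg, hrp_tot, _⟩ :=
        IH (N - (lam + 1)) (by omega) p hpdeg
      refine ⟨fg + rp, ?_, ?_, ?_, ?_⟩
      · intro s hs
        rw [map_add, hrp_eval s hs, hfgeval s hs]
      · intro j
        refine lt_of_le_of_lt (degreeOf_add_le _ _ _) ?_
        exact max_lt (hfgdeg j) (hrp_deg j)
      · refine le_trans (totalDegree_add _ _) ?_
        exact max_le hfgtot (by omega)
      · intro γ hγ hγN
        rw [coeff_add]
        have hrpz : coeff γ rp = 0 := by
          refine coeff_eq_zero_of_lt ?_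
          have h1 : rp.totalDegree ≤ N - (lam + 1) := by omega
          omega
        rw [hrpz, add_zero]
        exact (hcoeff_good γ hγ).symm

end Multivariate

end NicaAux

/-- Nica's Combinatorial Nullstellensatz for structured grids. -/
theorem stmt_3 {K : Type*} [Field K] {n : ℕ} (lam : ℕ) (S : Fin n → Finset K)
    (hnull : ∀ i, IsNull lam (S i))
    (f : MvPolynomial (Fin n) K) (α : Fin n →₀ ℕ)
    (hα : α ∈ f.support)
    (hlt : ∀ i, α i < (S i).card)
    (hdeg : f.totalDegree ≤ (∑ i, α i) + lam) :
    ∃ s : Fin n → K, (∀ i, s i ∈ S i) ∧ MvPolynomial.eval s f ≠ 0 := by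
  classical
  have hd1 : ∀ i, 1 ≤ (S i).card := fun i => lt_of_le_of_lt (Nat.zero_le _) (hlt i)
  obtain ⟨r, hre, hrd, hrt, hrc⟩ := NicaAux.reduce lam S hnull hd1 f.totalDegree f le_rfl
  have hcoeff : MvPolynomial.coeff α r = MvPolynomial.coeff α f := hrc α hlt hdeg
  have hαne : MvPolynomial.coeff α f ≠ 0 := MvPolynomial.mem_support_iff.mp hα
  have hr0 : r ≠ 0 := fun h => hαne (by rw [← hcoeff, h, MvPolynomial.coeff_zero])
  obtain ⟨s, hs, hev⟩ := NicaAux.grid_exists S r hr0 hrd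
  exact ⟨s, hs, fun h => hev (by rw [hre s hs, h])⟩
end

section
/- Let λ ∈ ℕ₀ⁿ and let f, g, h ∈ K[x₁,…,xₙ] with f = g·h, g ≠ 0, h ≠ 0. If g and h are both λ-lacunary, then f is λ-lacunary. -/
/-- Products of λ-lacunary polynomials are λ-lacunary. -/
theorem stmt_4 {K : Type*} [Field K] {n : ℕ} (lam : Fin n → ℕ)
    (f g h : MvPolynomial (Fin n) K) (hf : f = g * h)
    (hg0 : g ≠ 0) (hh0 : h ≠ 0)
    (hg : MvLacunary lam g) (hh : MvLacunary lam h) :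
    MvLacunary lam f := by
  obtain ⟨μ, hμ, hgμ⟩ := hg
  obtain ⟨ν, hν, hhν⟩ := hh
  refine ⟨μ + ν, ?_, ?_⟩
  · rw [hf, MvPolynomial.mem_support_iff, MvPolynomial.coeff_mul]
    have key : ∀ p ∈ Finset.HasAntidiagonal.antidiagonal (μ + ν), p ≠ (μ, ν) →
        MvPolynomial.coeff p.1 g * MvPolynomial.coeff p.2 h = 0 := by
      rintro ⟨a, b⟩ hab hne
      by_contra hc
      have hag : a ∈ g.support := MvPolynomial.mem_support_iff.mpr (left_ne_zero_of_mul hc)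
      have hbh : b ∈ h.support := MvPolynomial.mem_support_iff.mpr (right_ne_zero_of_mul hc)
      have hale : ∀ i, a i ≤ μ i := fun i => by rcases hgμ a hag i with h1 | h1 <;> omega
      have hble : ∀ i, b i ≤ ν i := fun i => by rcases hhν b hbh i with h1 | h1 <;> omega
      have hsum : a + b = μ + ν := Finset.HasAntidiagonal.mem_antidiagonal.mp hab
      have ha : a = μ := by
        ext i
        have h1 := DFunLike.congr_fun hsum i
        simp only [Finsupp.add_apply] at h1
        have h2 := hale i; have h3 := hble i; omega
      have hb : b = ν := by
        ext i
        have h1 := DFunLike.congr_fun hsum i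
        simp only [Finsupp.add_apply] at h1
        have h2 := hale i; have h3 := hble i; omega
      exact hne (by rw [ha, hb])
    rw [Finset.sum_eq_single_of_mem (μ, ν) (Finset.HasAntidiagonal.mem_antidiagonal.mpr rfl) key]
    exact mul_ne_zero (MvPolynomial.mem_support_iff.mp hμ) (MvPolynomial.mem_support_iff.mp hν)
  · intro τ hτ i
    rw [hf] at hτ
    have hτc := MvPolynomial.mem_support_iff.mp hτ
    rw [MvPolynomial.coeff_mul] at hτc
    obtain ⟨⟨a, b⟩, hab, hne⟩ := Finset.exists_ne_zero_of_sum_ne_zero hτc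
    have hag : a ∈ g.support := MvPolynomial.mem_support_iff.mpr (left_ne_zero_of_mul hne)
    have hbh : b ∈ h.support := MvPolynomial.mem_support_iff.mpr (right_ne_zero_of_mul hne)
    have hsum : a + b = τ := Finset.HasAntidiagonal.mem_antidiagonal.mp hab
    have hτi : τ i = a i + b i := by rw [← hsum]; simp
    rcases hgμ a hag i with h1 | h1 <;> rcases hhν b hbh i with h2 | h2 <;>
      simp only [Finsupp.add_apply, hτi] <;> omega
end

section
/- Let λ ∈ ℕ₀ⁿ and let f, g, h ∈ K[x₁,…,xₙ] with f = g·h and g, h nonzero. If f and g are λ-lacunary, then h is λ-lacunary. -/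
lemma conv_single {K : Type*} [Field K] {n : ℕ}
    (g h : MvPolynomial (Fin n) K) (μ c : Fin n →₀ ℕ)
    (huniq : ∀ a ∈ g.support, ∀ b ∈ h.support, a + b = μ + c → a = μ ∧ b = c) :
    (g * h).coeff (μ + c) = g.coeff μ * h.coeff c := by
  rw [MvPolynomial.coeff_mul]
  have hmem : ((μ, c) : (Fin n →₀ ℕ) × (Fin n →₀ ℕ)) ∈ Finset.HasAntidiagonal.antidiagonal (μ + c) :=
    Finset.HasAntidiagonal.mem_antidiagonal.mpr rfl
  apply Finset.sum_eq_single_of_mem _ hmem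
  rintro ⟨a, b⟩ hp hne
  rw [Finset.HasAntidiagonal.mem_antidiagonal] at hp
  by_contra habs
  have h1 : a ∈ g.support := MvPolynomial.mem_support_iff.mpr
    (fun h0 => habs (by rw [h0, zero_mul]))
  have h2 : b ∈ h.support := MvPolynomial.mem_support_iff.mpr
    (fun h0 => habs (by rw [h0, mul_zero]))
  obtain ⟨e1, e2⟩ := huniq a h1 b h2 hp
  subst e1; subst e2; exact hne rfl

/-- Quotients of λ-lacunary polynomials are λ-lacunary. -/
theorem stmt_5 {K : Type*} [Field K] {n : ℕ} (lam : Fin n → ℕ)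
    (f g h : MvPolynomial (Fin n) K) (hfgh : f = g * h)
    (hg0 : g ≠ 0) (hh0 : h ≠ 0)
    (hf : MvLacunary lam f) (hg : MvLacunary lam g) :
    MvLacunary lam h := by
  classical
  obtain ⟨μf, hμf, Hf⟩ := hf
  obtain ⟨μg, hμg, Hg⟩ := hg
  have hgdom : ∀ a ∈ g.support, ∀ i, a i ≤ μg i := fun a ha i => by
    rcases Hg a ha i with h1 | h1 <;> omega
  have hfdom : ∀ a ∈ f.support, ∀ i, a i ≤ μf i := fun a ha i => by
    rcases Hf a ha i with h1 | h1 <;> omega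
  have hhdom : ∀ c ∈ h.support, ∀ i, c i ≤ h.degreeOf i := fun c hc i => by
    rw [MvPolynomial.degreeOf_eq_sup]; exact Finset.le_sup (f := fun m => m i) hc
  have hdegf : ∀ i, f.degreeOf i = μf i := fun i => by
    rw [MvPolynomial.degreeOf_eq_sup]
    exact le_antisymm (Finset.sup_le fun a ha => hfdom a ha i) (Finset.le_sup (f := fun m => m i) hμf)
  have hdegg : ∀ i, g.degreeOf i = μg i := fun i => by
    rw [MvPolynomial.degreeOf_eq_sup]
    exact le_antisymm (Finset.sup_le fun a ha => hgdom a ha i) (Finset.le_sup (f := fun m => m i) hμg)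
  set w : (Fin n →₀ ℕ) → ℕ := fun c => ∑ j, c j with hw
  have weq : ∀ b c : Fin n →₀ ℕ, (∀ j, c j ≤ b j) → w b ≤ w c → b = c := by
    intro b c hle hs
    ext j
    by_contra hne
    have hlt : c j < b j := lt_of_le_of_ne (hle j) (Ne.symm hne)
    have : w c < w b := Finset.sum_lt_sum (fun k _ => hle k) ⟨j, Finset.mem_univ j, hlt⟩
    omega
  have hcoord : ∀ (a b p q : Fin n →₀ ℕ), a + b = p + q → ∀ j, a j + b j = p j + q j := by
    intro a b p q hab j
    have := congrArg (fun x => x j) hab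
    simpa using this
  -- additivity of degreeOf
  have hadd : ∀ i, f.degreeOf i = g.degreeOf i + h.degreeOf i := by
    intro i
    apply le_antisymm
    · rw [hfgh]; exact MvPolynomial.degreeOf_mul_le i g h
    · have hsupp : h.support.Nonempty := MvPolynomial.support_nonempty.mpr hh0
      obtain ⟨c0, hc0, hc0i⟩ := Finset.exists_mem_eq_sup h.support hsupp (fun m => m i)
      set S := h.support.filter (fun cc => cc i = h.degreeOf i) with hS
      have hc0S : c0 ∈ S := Finset.mem_filter.mpr
        ⟨hc0, by rw [MvPolynomial.degreeOf_eq_sup, hc0i]⟩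
      obtain ⟨c, hcS, hcmax⟩ := Finset.exists_max_image S w ⟨c0, hc0S⟩
      obtain ⟨hch, hci⟩ := Finset.mem_filter.mp hcS
      have key : (g * h).coeff (μg + c) = g.coeff μg * h.coeff c := by
        apply conv_single
        intro a ha b hb hab
        have hc' := hcoord a b μg c hab
        have hbge : ∀ j, c j ≤ b j := fun j => by have := hgdom a ha j; have := hc' j; omega
        have hbi : b i = h.degreeOf i :=
          le_antisymm (hhdom b hb i) (hci ▸ hbge i)
        have hbc : b = c := weq b c hbge (hcmax b (Finset.mem_filter.mpr ⟨hb, hbi⟩))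
        subst hbc
        refine ⟨?_, rfl⟩
        ext j; have := hc' j; omega
      have hne : (g * h).coeff (μg + c) ≠ 0 := by
        rw [key]
        exact mul_ne_zero (MvPolynomial.mem_support_iff.mp hμg)
          (MvPolynomial.mem_support_iff.mp hch)
      have hmem : μg + c ∈ f.support := by
        rw [hfgh]; exact MvPolynomial.mem_support_iff.mpr hne
      have hle := hfdom _ hmem i
      rw [Finsupp.add_apply] at hle
      rw [hdegf i, hdegg i]
      omega
  -- the degree vector
  set d : Fin n →₀ ℕ := Finsupp.equivFunOnFinite.symm (fun i => h.degreeOf i) with hdd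
  have hd : ∀ i, d i = h.degreeOf i := fun i => rfl
  have hsum : μg + d = μf := by
    ext i
    rw [Finsupp.add_apply, hd i, ← hdegg i, ← hadd i, hdegf i]
  have hdsupp : d ∈ h.support := by
    have key : (g * h).coeff (μg + d) = g.coeff μg * h.coeff d := by
      apply conv_single
      intro a ha b hb hab
      have hc' := hcoord a b μg d hab
      have h1 : ∀ j, a j = μg j ∧ b j = d j := fun j => by
        have h2 := hgdom a ha j
        have h3 := hhdom b hb j
        rw [← hd j] at h3
        have := hc' j
        omega
      exact ⟨Finsupp.ext fun j => (h1 j).1, Finsupp.ext fun j => (h1 j).2⟩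
    rw [hsum, ← hfgh] at key
    have : g.coeff μg * h.coeff d ≠ 0 := key ▸ MvPolynomial.mem_support_iff.mp hμf
    exact MvPolynomial.mem_support_iff.mpr fun h0 => this (by rw [h0, mul_zero])
  refine ⟨d, hdsupp, ?_⟩
  intro ν0 hν0 i
  by_contra hbad0
  push_neg at hbad0
  obtain ⟨hb1, hb2⟩ := hbad0
  set T := h.support.filter (fun cc => d i ≤ cc i + lam i ∧ cc i ≠ d i) with hT
  have hν0T : ν0 ∈ T := Finset.mem_filter.mpr ⟨hν0, by omega, hb2⟩
  obtain ⟨ν, hνT, hνmax⟩ := Finset.exists_max_image T w ⟨ν0, hν0T⟩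
  obtain ⟨hνh, hνi1, hνi2⟩ := Finset.mem_filter.mp hνT
  have hνle : ν i ≤ d i := by rw [hd i]; exact hhdom ν hνh i
  have key : (g * h).coeff (μg + ν) = g.coeff μg * h.coeff ν := by
    apply conv_single
    intro a ha b hb hab
    have hc' := hcoord a b μg ν hab
    have hbge : ∀ j, ν j ≤ b j := fun j => by have := hgdom a ha j; have := hc' j; omega
    have hbd : b i ≤ d i := by rw [hd i]; exact hhdom b hb i
    have hai : a i = μg i := by
      rcases Hg a ha i with h1 | h1
      · exfalso; have := hc' i; omega
      · exact h1
    have hbi : b i = ν i := by have := hc' i; omega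
    have hbT : b ∈ T := Finset.mem_filter.mpr ⟨hb, by omega, by omega⟩
    have hbν : b = ν := weq b ν hbge (hνmax b hbT)
    subst hbν
    refine ⟨?_, rfl⟩
    ext j; have := hc' j; omega
  have hnotin : μg + ν ∉ f.support := by
    intro hmem
    rcases Hf _ hmem i with h1 | h1 <;>
      [skip; skip] <;>
      · rw [Finsupp.add_apply] at h1
        have h2 := hadd i
        rw [hdegf i, hdegg i] at h2
        have h3 : d i = h.degreeOf i := hd i
        omega
  have h0 : f.coeff (μg + ν) = 0 := by
    by_contra hc
    exact hnotin (MvPolynomial.mem_support_iff.mpr hc)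
  rw [hfgh, key] at h0
  exact (mul_ne_zero (MvPolynomial.mem_support_iff.mp hμg)
    (MvPolynomial.mem_support_iff.mp hνh)) h0
end

section
/- Let K be a field, X a finite subset of Kⁿ, and t ∈ ℕ. Then the set I_t(X) of polynomials in K[x₁,…,xₙ] having a zero of multiplicity ≥ t at every point of X equals the t-th power I(X)^t of the vanishing ideal I(X) of X. -/
section Aux

open MvPolynomial

variable {K : Type*} [Field K] {n : ℕ}

/-- Translation automorphism `X i ↦ X i + c i`. -/
noncomputable def translAux (c : Fin n → K) :
    MvPolynomial (Fin n) K ≃ₐ[K] MvPolynomial (Fin n) K :=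
  AlgEquiv.ofAlgHom (aeval fun i => X i + C (c i)) (aeval fun i => X i - C (c i))
    (by ext i; simp) (by ext i; simp)

lemma mem_vanishingAux {Y : Set (Fin n → K)} {f : MvPolynomial (Fin n) K} :
    f ∈ vanishingIdealOn Y ↔ ∀ x ∈ Y, eval x f = 0 := Iff.rfl

lemma vanishing_zeroAux :
    vanishingIdealOn ({0} : Set (Fin n → K)) =
      Ideal.span (Set.range (X : Fin n → MvPolynomial (Fin n) K)) := by
  ext f
  rw [mem_vanishingAux, ← Set.image_univ, mem_ideal_span_X_image]
  constructor
  · intro h m hm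
    have h0 : coeff 0 f = 0 := by
      have := h 0 (Set.mem_singleton _)
      rwa [eval_zero, constantCoeff_eq] at this
    have hne : m ≠ 0 := fun e => mem_support_iff.mp hm (e ▸ h0)
    have : ∃ i, m i ≠ 0 := by
      by_contra hc
      push_neg at hc
      exact hne (Finsupp.ext hc)
    obtain ⟨i, hi⟩ := this
    exact ⟨i, Set.mem_univ i, hi⟩
  · intro h x hx
    rw [Set.mem_singleton_iff] at hx
    subst hx
    rw [eval_zero, constantCoeff_eq]
    by_contra h0
    obtain ⟨i, -, hi⟩ := h 0 (mem_support_iff.mpr h0)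
    exact hi rfl

noncomputable def translE (c : Fin n → K) :
    MvPolynomial (Fin n) K ≃+* MvPolynomial (Fin n) K := (translAux c).toRingEquiv

lemma translE_apply (c : Fin n → K) (f : MvPolynomial (Fin n) K) :
    translE c f = aeval (fun i => X i + C (c i)) f := rfl

lemma eval_translE (c : Fin n → K) (f : MvPolynomial (Fin n) K) :
    eval (0 : Fin n → K) (translE c f) = eval c f := by
  simp only [translE_apply]
  induction f using MvPolynomial.induction_on with
  | C a => simp [algebraMap_eq]
  | add p q hp hq => simp only [map_add, hp, hq]
  | mul_X p i hp =>
      simp only [map_mul, aeval_X, map_add, eval_mul, eval_add, eval_X, eval_C, hp]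
      simp

lemma vanishing_singleton_eq (c : Fin n → K) :
    vanishingIdealOn ({c} : Set (Fin n → K)) =
      Ideal.comap (translE c : MvPolynomial (Fin n) K ≃+* MvPolynomial (Fin n) K)
        (vanishingIdealOn ({0} : Set (Fin n → K))) := by
  ext f
  simp only [Ideal.mem_comap, mem_vanishingAux, Set.mem_singleton_iff, forall_eq]
  rw [eval_translE]

/-- `HasMultZero` is membership in the `t`-th power of the vanishing ideal of the point. -/
lemma hasMultZero_iff (t : ℕ) (c : Fin n → K) (f : MvPolynomial (Fin n) K) :
    HasMultZero t c f ↔ f ∈ (vanishingIdealOn ({c} : Set (Fin n → K))) ^ t := by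
  have key : (vanishingIdealOn ({c} : Set (Fin n → K))) ^ t =
      Ideal.comap (translE c : MvPolynomial (Fin n) K ≃+* MvPolynomial (Fin n) K)
        ((vanishingIdealOn ({0} : Set (Fin n → K))) ^ t) := by
    rw [vanishing_singleton_eq, ← Ideal.map_symm, ← Ideal.map_symm, Ideal.map_pow]
  have he : translE c f = eval₂Hom C (fun i => X i + C (c i)) f := by
    rw [translE_apply, aeval_eq_eval₂Hom, algebraMap_eq]
  unfold HasMultZero
  rw [← vanishing_zeroAux, ← he, key, Ideal.mem_comap]

lemma comax_points {c d : Fin n → K} (hcd : c ≠ d) :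
    vanishingIdealOn ({c} : Set (Fin n → K)) ⊔ vanishingIdealOn ({d} : Set (Fin n → K)) = ⊤ := by
  obtain ⟨i, hi⟩ : ∃ i, c i ≠ d i := by
    by_contra hc; push_neg at hc; exact hcd (funext hc)
  rw [Ideal.eq_top_iff_one]
  set u : K := (c i - d i)⁻¹
  have hy : (C u * (C (c i) - X i) : MvPolynomial (Fin n) K) ∈
      vanishingIdealOn ({c} : Set (Fin n → K)) := by
    rw [mem_vanishingAux]; intro x hx
    rw [Set.mem_singleton_iff] at hx; subst hx; simp
  have hz : (C u * (X i - C (d i)) : MvPolynomial (Fin n) K) ∈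
      vanishingIdealOn ({d} : Set (Fin n → K)) := by
    rw [mem_vanishingAux]; intro x hx
    rw [Set.mem_singleton_iff] at hx; subst hx; simp
  have hsum : (C u * (C (c i) - X i) : MvPolynomial (Fin n) K) +
      C u * (X i - C (d i)) = 1 := by
    rw [← mul_add]
    have : (C (c i) - X i : MvPolynomial (Fin n) K) + (X i - C (d i)) = C (c i - d i) := by
      rw [map_sub]; ring
    rw [this, ← map_mul]
    rw [inv_mul_cancel₀ (sub_ne_zero_of_ne hi)]
    exact C_1
  exact hsum ▸ Submodule.add_mem_sup hy hz

lemma vanishing_insert (a : Fin n → K) (s : Set (Fin n → K)) :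
    vanishingIdealOn (insert a s) =
      vanishingIdealOn ({a} : Set (Fin n → K)) ⊓ vanishingIdealOn s := by
  ext f
  simp only [Submodule.mem_inf, mem_vanishingAux, Set.mem_insert_iff, Set.mem_singleton_iff,
    forall_eq]
  constructor
  · intro h
    exact ⟨h a (Or.inl rfl), fun x hx => h x (Or.inr hx)⟩
  · rintro ⟨h1, h2⟩ x (rfl | hx)
    · exact h1
    · exact h2 x hx

lemma vanishing_finset_eq_iInf (s : Finset (Fin n → K)) :
    vanishingIdealOn (s : Set (Fin n → K)) =
      ⨅ d ∈ s, vanishingIdealOn ({d} : Set (Fin n → K)) := by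
  ext f
  simp only [Submodule.mem_iInf, mem_vanishingAux, Finset.mem_coe, Set.mem_singleton_iff,
    forall_eq]

lemma comax_set {c : Fin n → K} {s : Finset (Fin n → K)} (hc : c ∉ s) :
    vanishingIdealOn ({c} : Set (Fin n → K)) ⊔ vanishingIdealOn (s : Set (Fin n → K)) = ⊤ := by
  rw [vanishing_finset_eq_iInf]
  exact Ideal.sup_iInf_eq_top fun d hd => comax_points (fun e => hc (e ▸ hd))

lemma pow_eq_iInf (t : ℕ) (s : Finset (Fin n → K)) :
    (vanishingIdealOn (s : Set (Fin n → K))) ^ t =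
      ⨅ c ∈ s, (vanishingIdealOn ({c} : Set (Fin n → K))) ^ t := by
  classical
  induction s using Finset.induction_on with
  | empty =>
    have h0 : vanishingIdealOn ((∅ : Finset (Fin n → K)) : Set (Fin n → K)) = ⊤ := by
      rw [Ideal.eq_top_iff_one, mem_vanishingAux]; simp
    rw [h0, Ideal.top_pow]
    simp
  | insert a s ha ih =>
    rw [Finset.coe_insert, vanishing_insert,
      ← Ideal.mul_eq_inf_of_coprime (comax_set ha), mul_pow,
      Ideal.mul_eq_inf_of_coprime (Ideal.pow_sup_pow_eq_top (comax_set ha)), ih,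
      Finset.iInf_insert]

end Aux

/-- `I_t(X) = I(X)^t` for finite `X`. -/
theorem stmt_8 {K : Type*} [Field K] {n : ℕ} (X : Finset (Fin n → K)) (t : ℕ)
    (ht : 0 < t) (f : MvPolynomial (Fin n) K) :
    (∀ c ∈ X, HasMultZero t c f) ↔
      f ∈ (vanishingIdealOn (X : Set (Fin n → K))) ^ t := by
  rw [pow_eq_iInf]
  simp only [Submodule.mem_iInf]
  exact forall_congr' fun c => forall_congr' fun hc => hasMultZero_iff t c f
end

section
/- Let K be a field, S = S₁ × ⋯ × Sₙ a grid over K, gᵢ := ∏_{a∈Sᵢ}(xᵢ − a), G = {g₁,…,gₙ}, and t ∈ ℕ. Then the set G^t of all products of t elements of G generates the ideal of all polynomials having a zero of multiplicity ≥ t at every point of S. -/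
namespace Stmt9Aux
open MvPolynomial

variable {K : Type*} [Field K] {n : ℕ}

noncomputable def shf (c : Fin n → K) :
    MvPolynomial (Fin n) K →ₐ[K] MvPolynomial (Fin n) K :=
  aeval (fun i => X i + C (c i))

lemma shf_apply (c : Fin n → K) (f : MvPolynomial (Fin n) K) :
    shf c f = eval₂Hom C (fun i => X i + C (c i)) f := by
  simp [shf, aeval_def, MvPolynomial.algebraMap_eq, coe_eval₂Hom]

noncomputable def unshf (c : Fin n → K) :
    MvPolynomial (Fin n) K →ₐ[K] MvPolynomial (Fin n) K :=
  aeval (fun i => X i - C (c i))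

lemma shf_unshf (c : Fin n → K) (f : MvPolynomial (Fin n) K) :
    shf c (unshf c f) = f := by
  have : (shf c).comp (unshf c) = AlgHom.id K _ := by
    apply MvPolynomial.algHom_ext
    intro i
    simp [shf, unshf]
  calc shf c (unshf c f) = ((shf c).comp (unshf c)) f := rfl
    _ = f := by rw [this]; rfl

/-- the ideal generated by the variables -/
noncomputable def MM (K : Type*) [Field K] (n : ℕ) : Ideal (MvPolynomial (Fin n) K) :=
  Ideal.span (Set.range (X : Fin n → MvPolynomial (Fin n) K))

lemma X_mem_MM (i : Fin n) : (X i : MvPolynomial (Fin n) K) ∈ MM K n :=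
  Ideal.subset_span ⟨i, rfl⟩

lemma constantCoeff_eq_zero_of_mem_MM {f : MvPolynomial (Fin n) K} (hf : f ∈ MM K n) :
    constantCoeff f = 0 := by
  have : MM K n ≤ RingHom.ker (constantCoeff (σ := Fin n) (R := K)) := by
    rw [MM, Ideal.span_le]
    rintro _ ⟨i, rfl⟩
    simp [RingHom.mem_ker]
  exact this hf

lemma le_sum (v : Fin n →₀ ℕ) (i : Fin n) : v i ≤ v.sum fun _ k => k := by
  by_cases h : v i = 0
  · simp [h]
  · exact Finset.single_le_sum (f := fun i => v i) (fun _ _ => Nat.zero_le _)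
      (Finsupp.mem_support_iff.mpr h)

lemma coeff_eq_zero_of_mem_MM_pow {t : ℕ} :
    ∀ {f : MvPolynomial (Fin n) K}, f ∈ (MM K n) ^ t →
      ∀ α : Fin n →₀ ℕ, (α.sum fun _ k => k) < t → coeff α f = 0 := by
  induction t with
  | zero => intro f _ α h; omega
  | succ t ih =>
    intro f hf
    rw [pow_succ] at hf
    refine Submodule.mul_induction_on hf ?_ ?_
    · intro a ha b hb α hα
      rw [coeff_mul]
      apply Finset.sum_eq_zero
      rintro ⟨u, v⟩ huv
      rw [Finset.HasAntidiagonal.mem_antidiagonal] at huv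
      have hsum : ((u + v).sum fun _ k => k) = (u.sum fun _ k => k) + (v.sum fun _ k => k) :=
        Finsupp.sum_add_index' (fun _ => rfl) (fun _ _ _ => rfl)
      rw [huv] at hsum
      by_cases hu : (u.sum fun _ k => k) < t
      · rw [ih ha u hu, zero_mul]
      · have hv : (v.sum fun _ k => k) = 0 := by omega
        have hv0 : v = 0 := by
          ext i
          have := le_sum v i
          simp only [Finsupp.coe_zero, Pi.zero_apply]
          omega
        rw [hv0]
        have : coeff 0 b = constantCoeff b := rfl
        rw [this, constantCoeff_eq_zero_of_mem_MM hb, mul_zero]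
    · intro a b ha hb α hα
      rw [coeff_add, ha α hα, hb α hα, add_zero]





open Polynomial in
lemma uni_mulP {P : Polynomial K}
    {u : Polynomial K}
    (hu : u ∈ Submodule.span K {h : Polynomial K | ∃ s k : ℕ, s < P.natDegree ∧ h = Polynomial.X ^ s * P ^ k}) :
    P * u ∈ Submodule.span K {h : Polynomial K | ∃ s k : ℕ, s < P.natDegree ∧ h = Polynomial.X ^ s * P ^ k} := by
  induction hu using Submodule.span_induction with
  | mem h hh =>
    obtain ⟨s, k, hs, rfl⟩ := hh
    exact Submodule.subset_span ⟨s, k + 1, hs, by ring⟩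
  | zero => rw [mul_zero]; exact Submodule.zero_mem _
  | add a b _ _ ha hb => rw [mul_add]; exact Submodule.add_mem _ ha hb
  | smul c a _ ha => rw [mul_smul_comm]; exact Submodule.smul_mem _ c ha

open Polynomial in
lemma uni_low {P : Polynomial K} (hm : 0 < P.natDegree) {f : Polynomial K}
    (hf : f.natDegree < P.natDegree) :
    f ∈ Submodule.span K {h : Polynomial K | ∃ s k : ℕ, s < P.natDegree ∧ h = Polynomial.X ^ s * P ^ k} := by
  rw [f.as_sum_range' P.natDegree hf]
  apply Submodule.sum_mem
  intro i hi
  rw [Finset.mem_range] at hi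
  rw [← Polynomial.C_mul_X_pow_eq_monomial, ← Polynomial.smul_eq_C_mul]
  exact Submodule.smul_mem _ _ (Submodule.subset_span ⟨i, 0, hi, by ring⟩)

open Polynomial in
lemma uni_span (P : Polynomial K) (hP : P.Monic) (hm : 0 < P.natDegree) (f : Polynomial K) :
    f ∈ Submodule.span K {h : Polynomial K | ∃ s k : ℕ, s < P.natDegree ∧ h = Polynomial.X ^ s * P ^ k} := by
  generalize hd : f.natDegree = d
  induction d using Nat.strong_induction_on generalizing f with
  | _ d ih =>
  by_cases h0 : f.natDegree < P.natDegree
  · exact uni_low hm h0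
  · push_neg at h0
    have hfz : f ≠ 0 := by
      intro h; rw [h] at h0; simp at h0; omega
    rw [← modByMonic_add_div f P]
    apply Submodule.add_mem
    · by_cases hz : f %ₘ P = 0
      · rw [hz]; exact Submodule.zero_mem _
      · exact uni_low hm (natDegree_lt_natDegree hz (degree_modByMonic_lt f hP))
    · apply uni_mulP
      apply ih (f.natDegree - P.natDegree) (by omega) _ (natDegree_divByMonic f hP)

noncomputable def gg (S : Fin n → Finset K) (i : Fin n) : MvPolynomial (Fin n) K :=
  ∏ a ∈ S i, (X i - C a)

open Polynomial in
lemma Xpow_mem_span (S : Fin n → Finset K) (i : Fin n) (hSi : (S i).Nonempty) (e : ℕ) :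
    (X i : MvPolynomial (Fin n) K) ^ e ∈ Submodule.span K
      {h : MvPolynomial (Fin n) K | ∃ s k : ℕ, s < (S i).card ∧ h = (X i) ^ s * (gg S i) ^ k} := by
  classical
  set P : Polynomial K := ∏ a ∈ S i, (Polynomial.X - Polynomial.C a) with hPdef
  have hP : P.Monic := monic_prod_of_monic _ _ (fun a _ => monic_X_sub_C a)
  have hdeg : P.natDegree = (S i).card := by
    rw [hPdef, natDegree_prod]
    · simp
    · intro a _; exact X_sub_C_ne_zero a
  have hm : 0 < P.natDegree := by rw [hdeg]; exact Finset.card_pos.mpr hSi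
  set T : Polynomial K →ₐ[K] MvPolynomial (Fin n) K := Polynomial.aeval (MvPolynomial.X i) with hT
  have hTP : T P = gg S i := by
    rw [hPdef, map_prod, gg]
    apply Finset.prod_congr rfl
    intro a _
    simp [hT]
  have h1 := uni_span P hP hm (Polynomial.X ^ e)
  have h2 := Submodule.mem_map_of_mem (f := T.toLinearMap) h1
  rw [Submodule.map_span] at h2
  have h3 : T.toLinearMap (Polynomial.X ^ e) = (MvPolynomial.X i : MvPolynomial (Fin n) K) ^ e := by
    simp [hT]
  rw [h3] at h2
  refine Submodule.span_mono ?_ h2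
  rintro _ ⟨h, ⟨s, k, hs, rfl⟩, rfl⟩
  refine ⟨s, k, hdeg ▸ hs, ?_⟩
  simp only [AlgHom.toLinearMap_apply, map_mul, map_pow, hTP]
  simp [hT]

lemma prod_Xpow_mem_span (S : Fin n → Finset K) (hS : ∀ i, (S i).Nonempty) (α : Fin n → ℕ)
    (F : Finset (Fin n)) :
    (∏ i ∈ F, (X i : MvPolynomial (Fin n) K) ^ (α i)) ∈ Submodule.span K
      {h : MvPolynomial (Fin n) K | ∃ s k : Fin n → ℕ, (∀ i ∈ F, s i < (S i).card) ∧
        h = ∏ i ∈ F, (X i) ^ (s i) * (gg S i) ^ (k i)} := by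
  classical
  induction F using Finset.induction_on with
  | empty =>
    simp only [Finset.prod_empty]
    exact Submodule.subset_span ⟨fun _ => 0, fun _ => 0, by simp, by simp⟩
  | @insert j F hjF ih =>
    rw [Finset.prod_insert hjF]
    have h1 := Xpow_mem_span S j (hS j) (α j)
    have h2 := Submodule.mul_mem_mul h1 ih
    rw [Submodule.span_mul_span] at h2
    refine Submodule.span_mono ?_ h2
    rintro _ ⟨u, ⟨s, k, hs, rfl⟩, w, ⟨s', k', hs', rfl⟩, rfl⟩
    refine ⟨Function.update s' j s, Function.update k' j k, ?_, ?_⟩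
    · intro i hi
      rcases Finset.mem_insert.mp hi with h | h
      · subst h; simp [hs]
      · have : i ≠ j := by rintro rfl; exact hjF h
        simpa [Function.update_of_ne this] using hs' i h
    · rw [Finset.prod_insert hjF]
      simp only [Function.update_self]
      congr 1
      apply Finset.prod_congr rfl
      intro i hi
      have : i ≠ j := by rintro rfl; exact hjF hi
      simp [Function.update_of_ne this]

lemma mem_span_W (S : Fin n → Finset K) (hS : ∀ i, (S i).Nonempty) (f : MvPolynomial (Fin n) K) :
    f ∈ Submodule.span K
      {h : MvPolynomial (Fin n) K | ∃ s k : Fin n → ℕ, (∀ i, s i < (S i).card) ∧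
        h = ∏ i, (X i) ^ (s i) * (gg S i) ^ (k i)} := by
  classical
  have hmono : ∀ α : Fin n →₀ ℕ, (monomial α (1:K)) ∈ Submodule.span K
      {h : MvPolynomial (Fin n) K | ∃ s k : Fin n → ℕ, (∀ i, s i < (S i).card) ∧
        h = ∏ i, (X i) ^ (s i) * (gg S i) ^ (k i)} := by
    intro α
    have := prod_Xpow_mem_span S hS (fun i => α i) Finset.univ
    have heq : (monomial α (1:K)) = ∏ i, (X i : MvPolynomial (Fin n) K) ^ (α i) := by
      rw [monomial_eq]
      simp [Finsupp.prod_pow]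
    rw [heq]
    refine Submodule.span_mono ?_ this
    rintro _ ⟨s, k, hs, rfl⟩
    exact ⟨s, k, fun i => hs i (Finset.mem_univ i), rfl⟩
  rw [← support_sum_monomial_coeff f]
  apply Submodule.sum_mem
  intro α _
  have : (monomial α (coeff α f)) = (coeff α f) • (monomial α (1:K)) := by
    rw [smul_monomial, smul_eq_mul, mul_one]
  rw [this]
  exact Submodule.smul_mem _ _ (hmono α)



lemma exists_le_sum (t : ℕ) : ∀ (k : Fin n → ℕ), t ≤ ∑ i, k i →
    ∃ β : Fin n → ℕ, (∀ i, β i ≤ k i) ∧ ∑ i, β i = t := by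
  induction t with
  | zero => intro k _; exact ⟨fun _ => 0, fun i => Nat.zero_le _, by simp⟩
  | succ t ih =>
    intro k hk
    obtain ⟨β, hβle, hβsum⟩ := ih k (by omega)
    have : ∃ i, β i < k i := by
      by_contra h
      push_neg at h
      have : ∑ i, k i ≤ ∑ i, β i := Finset.sum_le_sum (fun i _ => h i)
      omega
    obtain ⟨i, hi⟩ := this
    classical
    refine ⟨Function.update β i (β i + 1), ?_, ?_⟩
    · intro j
      by_cases hji : j = i
      · subst hji; simp; omega
      · simp [Function.update_of_ne hji]; exact hβle j
    · rw [Finset.sum_update_of_mem (Finset.mem_univ i)]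
      rw [← hβsum, Finset.sum_eq_sum_sdiff_singleton_add (Finset.mem_univ i) β]
      omega

/-- the finset of exponent functions with sum < t -/
noncomputable def Fq (n t : ℕ) : Finset (Fin n → ℕ) :=
  (Fintype.piFinset fun _ => Finset.range t).filter (fun q => ∑ i, q i < t)

lemma mem_Fq {t : ℕ} {q : Fin n → ℕ} : q ∈ Fq n t ↔ ∑ i, q i < t := by
  constructor
  · intro h; exact (Finset.mem_filter.mp h).2
  · intro h
    refine Finset.mem_filter.mpr ⟨Fintype.mem_piFinset.mpr fun i => Finset.mem_range.mpr ?_, h⟩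
    have : q i ≤ ∑ j, q j := Finset.single_le_sum (fun j _ => Nat.zero_le _) (Finset.mem_univ i)
    omega




open Classical in
noncomputable def Vgen (S : Fin n → Finset K) (t : ℕ) : Finset (MvPolynomial (Fin n) K) :=
  ((Fintype.piFinset fun i => Finset.range (S i).card) ×ˢ Fq n t).image
    fun p => ∏ i, (X i) ^ (p.1 i) * (gg S i) ^ (p.2 i)

noncomputable def Jid (S : Fin n → Finset K) (t : ℕ) : Ideal (MvPolynomial (Fin n) K) :=
  Ideal.span {p | ∃ β : Fin n → ℕ, (∑ i, β i) = t ∧ p = ∏ i, (gg S i) ^ (β i)}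

lemma span_Vgen_sup_J (S : Fin n → Finset K) (t : ℕ) (hS : ∀ i, (S i).Nonempty) :
    Submodule.span K ((Vgen S t : Set (MvPolynomial (Fin n) K))) ⊔
      (Jid S t).restrictScalars K = ⊤ := by
  classical
  rw [eq_top_iff]
  intro f _
  have hle : Submodule.span K
      {h : MvPolynomial (Fin n) K | ∃ s k : Fin n → ℕ, (∀ i, s i < (S i).card) ∧
        h = ∏ i, (X i) ^ (s i) * (gg S i) ^ (k i)} ≤
      Submodule.span K ((Vgen S t : Set (MvPolynomial (Fin n) K))) ⊔
        (Jid S t).restrictScalars K := by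
    rw [Submodule.span_le]
    rintro h ⟨s, k, hs, rfl⟩
    by_cases hk : ∑ i, k i < t
    · apply Submodule.mem_sup_left
      apply Submodule.subset_span
      exact Finset.mem_image.mpr ⟨(s, k), Finset.mem_product.mpr
        ⟨Fintype.mem_piFinset.mpr fun i => Finset.mem_range.mpr (hs i), mem_Fq.mpr hk⟩, rfl⟩
    · push_neg at hk
      obtain ⟨β, hβle, hβsum⟩ := exists_le_sum t k hk
      apply Submodule.mem_sup_right
      have heq : (∏ i, (X i : MvPolynomial (Fin n) K) ^ (s i) * (gg S i) ^ (k i)) =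
          (∏ i, (X i) ^ (s i) * (gg S i) ^ (k i - β i)) * ∏ i, (gg S i) ^ (β i) := by
        rw [← Finset.prod_mul_distrib]
        apply Finset.prod_congr rfl
        intro i _
        rw [mul_assoc, ← pow_add, Nat.sub_add_cancel (hβle i)]
      show _ ∈ Jid S t
      rw [heq]
      exact Ideal.mul_mem_left _ _ (Ideal.subset_span ⟨β, hβsum, rfl⟩)
  exact hle (mem_span_W S hS f)

lemma quot_J_finite_and_finrank_le (S : Fin n → Finset K) (t : ℕ) (hS : ∀ i, (S i).Nonempty) :
    Module.Finite K (MvPolynomial (Fin n) K ⧸ (Jid S t).restrictScalars K) ∧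
    Module.finrank K (MvPolynomial (Fin n) K ⧸ (Jid S t).restrictScalars K) ≤
      (∏ i, (S i).card) * (Fq n t).card := by
  classical
  set p := (Jid S t).restrictScalars K with hp
  set Q := MvPolynomial (Fin n) K ⧸ p with hQ
  set W : Finset Q := (Vgen S t).image (fun x => p.mkQ x) with hW
  have hspan : Submodule.span K (W : Set Q) = ⊤ := by
    have h1 : Submodule.map p.mkQ (Submodule.span K ((Vgen S t : Set (MvPolynomial (Fin n) K))) ⊔ p) = ⊤ := by
      rw [span_Vgen_sup_J S t hS, Submodule.map_top, Submodule.range_mkQ]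
    rw [Submodule.map_sup, Submodule.map_span] at h1
    have h2 : Submodule.map p.mkQ p = ⊥ := by
      rw [eq_bot_iff]
      rintro _ ⟨y, hy, rfl⟩
      simpa using (Submodule.Quotient.mk_eq_zero p).mpr hy
    rw [h2, sup_bot_eq] at h1
    have h4 : (W : Set Q) = p.mkQ '' (Vgen S t : Set (MvPolynomial (Fin n) K)) := by
      rw [hW, Finset.coe_image]
    rw [h4]
    exact h1
  constructor
  · exact ⟨⟨W, hspan⟩⟩
  · have h3 : Module.finrank K Q = Module.finrank K (Submodule.span K (W : Set Q)) := by
      rw [hspan, finrank_top]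
    rw [h3]
    calc Module.finrank K (Submodule.span K (W : Set Q)) ≤ W.card :=
        finrank_span_finset_le_card _
      _ ≤ (Vgen S t).card := Finset.card_image_le
      _ ≤ ((Fintype.piFinset fun i => Finset.range (S i).card) ×ˢ Fq n t).card :=
          Finset.card_image_le
      _ = (∏ i, (S i).card) * (Fq n t).card := by
          rw [Finset.card_product, Fintype.card_piFinset]
          simp



abbrev GridIdx (S : Fin n → Finset K) := ∀ i, {x // x ∈ S i}

def cpt {S : Fin n → Finset K} (v : GridIdx S) : Fin n → K := fun i => (v i : K)

noncomputable def Ic (S : Fin n → Finset K) (t : ℕ) (v : GridIdx S) :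
    Ideal (MvPolynomial (Fin n) K) :=
  (MM K n ^ t).comap (shf (cpt v)).toRingHom

noncomputable def It (S : Fin n → Finset K) (t : ℕ) : Ideal (MvPolynomial (Fin n) K) :=
  ⨅ v : GridIdx S, Ic S t v

lemma mem_Ic_iff {S : Fin n → Finset K} {t : ℕ} {v : GridIdx S} {f : MvPolynomial (Fin n) K} :
    f ∈ Ic S t v ↔ shf (cpt v) f ∈ MM K n ^ t := Iff.rfl

lemma mem_It_iff {S : Fin n → Finset K} {t : ℕ} {f : MvPolynomial (Fin n) K} :
    f ∈ It S t ↔ ∀ c : Fin n → K, (∀ i, c i ∈ S i) → shf c f ∈ MM K n ^ t := by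
  rw [It, Ideal.mem_iInf]
  constructor
  · intro h c hc
    have := h (fun i => ⟨c i, hc i⟩)
    rwa [mem_Ic_iff] at this
  · intro h v
    exact h (cpt v) (fun i => (v i).2)

lemma shf_C (c : Fin n → K) (a : K) : shf c (C a) = (C a : MvPolynomial (Fin n) K) := by
  simp [shf, algebraMap_eq]

lemma shf_gg_mem {S : Fin n → Finset K} {c : Fin n → K} {i : Fin n} (hci : c i ∈ S i) :
    shf c (gg S i) ∈ MM K n := by
  classical
  rw [gg, map_prod]
  have : ∀ a ∈ S i, shf c (X i - C a) = X i + C (c i) - C a := by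
    intro a _
    rw [map_sub, shf_C]
    simp [shf]
  rw [Finset.prod_congr rfl this, ← Finset.mul_prod_erase _ _ hci]
  have h0 : (X i + C (c i) - C (c i) : MvPolynomial (Fin n) K) = X i := by ring
  rw [h0]
  exact Ideal.mul_mem_right _ _ (X_mem_MM i)

lemma J_le_It (S : Fin n → Finset K) (t : ℕ) : Jid S t ≤ It S t := by
  rw [Jid, Ideal.span_le]
  rintro p ⟨β, hβ, rfl⟩
  rw [SetLike.mem_coe, mem_It_iff]
  intro c hc
  rw [map_prod]
  have h1 : ∀ i ∈ Finset.univ, shf c ((gg S i) ^ (β i)) ∈ (MM K n) ^ (β i) := by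
    intro i _
    rw [map_pow]
    exact Ideal.pow_mem_pow (shf_gg_mem (hc i)) _
  have h2 := Ideal.prod_mem_prod h1
  rwa [Finset.prod_pow_eq_pow_sum, hβ] at h2


lemma Ic_coprime {S : Fin n → Finset K} {t : ℕ} : Pairwise (Function.onFun IsCoprime (Ic S t)) := by
  intro v w hvw
  obtain ⟨i, hi⟩ := Function.ne_iff.mp hvw
  set a : K := (v i : K) with ha
  set b : K := (w i : K) with hb
  have hab : a ≠ b := fun h => hi (Subtype.ext h)
  have hba : b - a ≠ 0 := sub_ne_zero.mpr (fun h => hab h.symm)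
  have hel : IsCoprime ((X i - C a : MvPolynomial (Fin n) K)) (X i - C b) := by
    refine ⟨C ((b - a)⁻¹), -C ((b - a)⁻¹), ?_⟩
    have : C ((b - a)⁻¹) * (X i - C a) + -C ((b - a)⁻¹) * (X i - C b)
        = C ((b - a)⁻¹) * (C b - C a : MvPolynomial (Fin n) K) := by ring
    rw [this, ← C_sub, ← C_mul, inv_mul_cancel₀ hba, C_1]
  obtain ⟨u, u', huu⟩ := hel.pow (n := t) (m := t)
  show IsCoprime (Ic S t v) (Ic S t w)
  rw [Ideal.isCoprime_iff_exists]
  have hmema : (X i - C a : MvPolynomial (Fin n) K) ^ t ∈ Ic S t v := by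
    rw [mem_Ic_iff, map_pow, map_sub, shf_C]
    have : shf (cpt v) (X i) = X i + C a := by simp [shf, cpt, ha]
    rw [this]
    have h0 : (X i + C a - C a : MvPolynomial (Fin n) K) = X i := by ring
    rw [h0]
    exact Ideal.pow_mem_pow (X_mem_MM i) t
  have hmemb : (X i - C b : MvPolynomial (Fin n) K) ^ t ∈ Ic S t w := by
    rw [mem_Ic_iff, map_pow, map_sub, shf_C]
    have : shf (cpt w) (X i) = X i + C b := by simp [shf, cpt, hb]
    rw [this]
    have h0 : (X i + C b - C b : MvPolynomial (Fin n) K) = X i := by ring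
    rw [h0]
    exact Ideal.pow_mem_pow (X_mem_MM i) t
  exact ⟨u * (X i - C a) ^ t, Ideal.mul_mem_left _ _ hmema,
    u' * (X i - C b) ^ t, Ideal.mul_mem_left _ _ hmemb, huu⟩

lemma crt (S : Fin n → Finset K) (t : ℕ) (fv : GridIdx S → MvPolynomial (Fin n) K) :
    ∃ f, ∀ v, f - fv v ∈ Ic S t v := by
  obtain ⟨y, hy⟩ := Ideal.quotientInfToPiQuotient_surj (Ic_coprime (S := S) (t := t))
    (fun v => Ideal.Quotient.mk (Ic S t v) (fv v))
  obtain ⟨f, rfl⟩ := Ideal.Quotient.mk_surjective y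
  refine ⟨f, fun v => ?_⟩
  have h := congrFun hy v
  rw [Ideal.quotientInfToPiQuotient_mk'] at h
  exact Ideal.Quotient.eq.mp h

noncomputable def Theta (S : Fin n → Finset K) (t : ℕ) :
    MvPolynomial (Fin n) K →ₗ[K] ((GridIdx S × {q // q ∈ Fq n t}) → K) :=
  LinearMap.pi fun p =>
    (lcoeff K (Finsupp.equivFunOnFinite.symm p.2.1)).comp (shf (cpt p.1)).toLinearMap

lemma sum_equivFunOnFinite_symm (q : Fin n → ℕ) :
    ((Finsupp.equivFunOnFinite.symm q).sum fun _ k => k) = ∑ i, q i := by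
  rw [Finsupp.sum_fintype]
  · rfl
  · intro _; rfl

lemma It_le_ker_Theta (S : Fin n → Finset K) (t : ℕ) :
    (It S t).restrictScalars K ≤ LinearMap.ker (Theta S t) := by
  intro f hf
  rw [LinearMap.mem_ker]
  funext p
  obtain ⟨v, q⟩ := p
  have h1 : shf (cpt v) f ∈ MM K n ^ t :=
    mem_It_iff.mp hf (cpt v) (fun i => (v i).2)
  have h2 : ((Finsupp.equivFunOnFinite.symm q.1).sum fun _ k => k) < t := by
    rw [sum_equivFunOnFinite_symm]
    exact mem_Fq.mp q.2
  exact coeff_eq_zero_of_mem_MM_pow h1 _ h2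

lemma Theta_surj (S : Fin n → Finset K) (t : ℕ) : Function.Surjective (Theta S t) := by
  classical
  intro h
  set pv : GridIdx S → MvPolynomial (Fin n) K := fun v =>
    ∑ q ∈ (Fq n t).attach, monomial (Finsupp.equivFunOnFinite.symm q.1) (h (v, q)) with hpv
  have hcoeff : ∀ (v : GridIdx S) (q : {q // q ∈ Fq n t}),
      coeff (Finsupp.equivFunOnFinite.symm q.1) (pv v) = h (v, q) := by
    intro v q
    rw [hpv, coeff_sum]
    have : ∀ q' ∈ (Fq n t).attach,
        coeff (Finsupp.equivFunOnFinite.symm q.1)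
          (monomial (Finsupp.equivFunOnFinite.symm q'.1) (h (v, q'))) =
        if q' = q then h (v, q') else 0 := by
      intro q' _
      rw [coeff_monomial]
      congr 1
      simp only [eq_iff_iff]
      constructor
      · intro he
        exact Subtype.ext (Finsupp.equivFunOnFinite.symm.injective he)
      · rintro rfl; rfl
    rw [Finset.sum_congr rfl this, Finset.sum_ite_eq' _ q (fun q' => h (v, q'))]
    simp
  obtain ⟨f, hf⟩ := crt S t (fun v => unshf (cpt v) (pv v))
  refine ⟨f, ?_⟩
  funext p
  obtain ⟨v, q⟩ := p
  have hsplit : shf (cpt v) f = pv v + shf (cpt v) (f - unshf (cpt v) (pv v)) := by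
    rw [map_sub, shf_unshf]; ring
  show coeff (Finsupp.equivFunOnFinite.symm q.1) (shf (cpt v) f) = h (v, q)
  rw [hsplit, coeff_add, hcoeff v q]
  have h2 : ((Finsupp.equivFunOnFinite.symm q.1).sum fun _ k => k) < t := by
    rw [sum_equivFunOnFinite_symm]
    exact mem_Fq.mp q.2
  have hmem : shf (cpt v) (f - unshf (cpt v) (pv v)) ∈ MM K n ^ t := hf v
  rw [coeff_eq_zero_of_mem_MM_pow hmem _ h2, add_zero]


lemma It_le_J (S : Fin n → Finset K) (t : ℕ) (hS : ∀ i, (S i).Nonempty) :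
    It S t ≤ Jid S t := by
  classical
  set p := (Jid S t).restrictScalars K with hpdef
  set pIt := (It S t).restrictScalars K with hItdef
  have hJle : p ≤ pIt := fun x hx => J_le_It S t hx
  obtain ⟨hfin, hrank⟩ := quot_J_finite_and_finrank_le S t hS
  rw [← hpdef] at hrank
  set ψ : (MvPolynomial (Fin n) K ⧸ p) →ₗ[K] (MvPolynomial (Fin n) K ⧸ pIt) :=
    Submodule.mapQ p pIt LinearMap.id hJle with hψ
  have hψsurj : Function.Surjective ψ := by
    intro y
    obtain ⟨x, rfl⟩ := Submodule.Quotient.mk_surjective pIt y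
    exact ⟨p.mkQ x, by rw [hψ]; erw [Submodule.mapQ_apply]; rfl⟩
  haveI : Module.Finite K (MvPolynomial (Fin n) K ⧸ p) := hfin
  haveI : Module.Finite K (MvPolynomial (Fin n) K ⧸ pIt) :=
    Module.Finite.of_surjective ψ hψsurj
  -- the lifted Theta
  set Θ' : (MvPolynomial (Fin n) K ⧸ pIt) →ₗ[K] ((GridIdx S × {q // q ∈ Fq n t}) → K) :=
    Submodule.liftQ pIt (Theta S t) (It_le_ker_Theta S t) with hΘ'
  have hΘ'surj : Function.Surjective Θ' := by
    intro y
    obtain ⟨f, hf⟩ := Theta_surj S t y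
    exact ⟨pIt.mkQ f, by rw [hΘ']; erw [Submodule.liftQ_apply]; exact hf⟩
  have hcardtarget : Module.finrank K ((GridIdx S × {q // q ∈ Fq n t}) → K) =
      (∏ i, (S i).card) * (Fq n t).card := by
    rw [Module.finrank_pi, Fintype.card_prod, Fintype.card_coe]
    congr 1
    rw [Fintype.card_pi]
    exact Finset.prod_congr rfl fun i _ => Fintype.card_coe _
  -- finrank inequalities from surjections
  have hle1 : Module.finrank K ((GridIdx S × {q // q ∈ Fq n t}) → K) ≤
      Module.finrank K (MvPolynomial (Fin n) K ⧸ pIt) := by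
    have := LinearMap.finrank_range_add_finrank_ker Θ'
    rw [LinearMap.range_eq_top.mpr hΘ'surj, finrank_top] at this
    omega
  have hle2 : Module.finrank K (MvPolynomial (Fin n) K ⧸ pIt) ≤
      Module.finrank K (MvPolynomial (Fin n) K ⧸ p) := by
    have := LinearMap.finrank_range_add_finrank_ker ψ
    rw [LinearMap.range_eq_top.mpr hψsurj, finrank_top] at this
    omega
  have heq : Module.finrank K (MvPolynomial (Fin n) K ⧸ p) =
      Module.finrank K (MvPolynomial (Fin n) K ⧸ pIt) := by omega
  have hkerψ : LinearMap.ker ψ = ⊥ := by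
    have h5 := LinearMap.finrank_range_add_finrank_ker ψ
    rw [LinearMap.range_eq_top.mpr hψsurj, finrank_top, ← heq] at h5
    have h6 : Module.finrank K (LinearMap.ker ψ) = 0 := by omega
    exact Submodule.finrank_eq_zero.mp h6
  intro f hf
  have h7 : ψ (p.mkQ f) = 0 := by
    rw [hψ]; erw [Submodule.mapQ_apply]
    exact (Submodule.Quotient.mk_eq_zero pIt).mpr hf
  have h8 : p.mkQ f ∈ LinearMap.ker ψ := h7
  rw [hkerψ, Submodule.mem_bot] at h8
  exact (Submodule.Quotient.mk_eq_zero p).mp h8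
end Stmt9Aux

/-- `G^t` generates the ideal of polynomials with `t`-fold zeros on the grid. -/
theorem stmt_9 {K : Type*} [Field K] {n : ℕ} (S : Fin n → Finset K) (t : ℕ)
    (ht : 0 < t) (f : MvPolynomial (Fin n) K) :
    f ∈ Ideal.span {p : MvPolynomial (Fin n) K | ∃ β : Fin n → ℕ,
        (∑ i, β i) = t ∧
        p = ∏ i, (∏ a ∈ S i, (MvPolynomial.X i - MvPolynomial.C a)) ^ β i} ↔
      ∀ c : Fin n → K, (∀ i, c i ∈ S i) → HasMultZero t c f := by
  classical
  by_cases hS : ∀ i, (S i).Nonempty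
  · constructor
    · intro hf c hc
      have h1 : f ∈ Stmt9Aux.Jid S t := hf
      have h2 : Stmt9Aux.shf c f ∈ Stmt9Aux.MM K n ^ t :=
        Stmt9Aux.mem_It_iff.mp (Stmt9Aux.J_le_It S t h1) c hc
      unfold HasMultZero
      rw [← Stmt9Aux.shf_apply]
      exact h2
    · intro h
      have h1 : f ∈ Stmt9Aux.It S t := by
        rw [Stmt9Aux.mem_It_iff]
        intro c hc
        have hm := h c hc
        unfold HasMultZero at hm
        rw [Stmt9Aux.shf_apply]
        exact hm
      exact Stmt9Aux.It_le_J S t hS h1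
  · push_neg at hS
    obtain ⟨i, hi⟩ := hS
    have h1 : (1 : MvPolynomial (Fin n) K) ∈ {p : MvPolynomial (Fin n) K | ∃ β : Fin n → ℕ,
        (∑ i, β i) = t ∧
        p = ∏ i, (∏ a ∈ S i, (MvPolynomial.X i - MvPolynomial.C a)) ^ β i} := by
      refine ⟨fun k => if k = i then t else 0, ?_, ?_⟩
      · simp [Finset.sum_ite_eq']
      · refine (Finset.prod_eq_one ?_).symm
        intro k _
        by_cases hk : k = i
        · subst hk; rw [hi]; simp
        · simp [hk]
    have h2 : Ideal.span {p : MvPolynomial (Fin n) K | ∃ β : Fin n → ℕ,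
        (∑ i, β i) = t ∧
        p = ∏ i, (∏ a ∈ S i, (MvPolynomial.X i - MvPolynomial.C a)) ^ β i} = ⊤ :=
      (Ideal.eq_top_iff_one _).mpr (Ideal.subset_span h1)
    rw [h2]
    simp only [Submodule.mem_top, true_iff]
    intro c hc
    exact absurd (hc i) (by rw [hi]; exact Finset.notMem_empty _)
end

section
/- Let K be a field, s, t ∈ ℕ, and g₁,…,gₛ ∈ K[x₁,…,xₙ] nonzero polynomials such that for i ≠ j the leading monomials Lm(gᵢ) and Lm(gⱼ) are coprime (share no variable), with respect to a fixed admissible monomial ordering. Then G^t := {g₁^{α₁}⋯gₛ^{αₛ} : αᵢ ∈ ℕ₀, Σαᵢ = t} is a Gröbner basis of the ideal ⟨g₁,…,gₛ⟩^t. -/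
namespace StmtAux
open MvPolynomial

variable {K : Type*} [Field K] {n : ℕ} {ord : LinearOrder (Fin n →₀ ℕ)}

lemma olt_iff {a b : Fin n →₀ ℕ} : ord.lt a b ↔ ord.le a b ∧ ¬ ord.le b a :=
  @Preorder.lt_iff_le_not_ge _ ord.toPreorder a b

lemma olt_of_le_not_le {a b : Fin n →₀ ℕ} (h : ord.le a b) (h2 : ¬ ord.le b a) :
    ord.lt a b := olt_iff.mpr ⟨h, h2⟩

lemma ole_of_lt {a b : Fin n →₀ ℕ} (h : ord.lt a b) : ord.le a b := (olt_iff.mp h).1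

lemma ole_total (a b : Fin n →₀ ℕ) : ord.le a b ∨ ord.le b a := ord.le_total a b

lemma olt_irrefl (a : Fin n →₀ ℕ) : ¬ ord.lt a a := fun h => (olt_iff.mp h).2 (olt_iff.mp h).1

lemma olt_of_le_of_lt {a b c : Fin n →₀ ℕ} (h : ord.le a b) (h2 : ord.lt b c) :
    ord.lt a c := by
  rcases olt_iff.mp h2 with ⟨h3, h4⟩
  exact olt_of_le_not_le (ord.le_trans _ _ _ h h3) (fun hc => h4 (ord.le_trans _ _ _ hc h))

lemma olt_of_lt_of_le {a b c : Fin n →₀ ℕ} (h : ord.lt a b) (h2 : ord.le b c) :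
    ord.lt a c := by
  rcases olt_iff.mp h with ⟨h3, h4⟩
  exact olt_of_le_not_le (ord.le_trans _ _ _ h3 h2) (fun hc => h4 (ord.le_trans _ _ _ h2 hc))

lemma onot_le {a b : Fin n →₀ ℕ} (h : ¬ ord.le a b) : ord.lt b a := by
  rcases ole_total a b with h1 | h1
  · exact absurd h1 h
  · exact olt_of_le_not_le h1 h

section OrderBasics

lemma adm_add_le (hadm : Admissible ord) {a b : Fin n →₀ ℕ} (c : Fin n →₀ ℕ) (h : ord.le a b) :
    ord.le (a + c) (b + c) := hadm.1 a b c h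

lemma adm_add_lt (hadm : Admissible ord) {a b : Fin n →₀ ℕ} (c : Fin n →₀ ℕ) (h : ord.lt a b) :
    ord.lt (a + c) (b + c) := by
  rcases olt_iff.mp h with ⟨hle, hnle⟩
  refine olt_of_le_not_le (hadm.1 _ _ _ hle) (fun hc => ?_)
  have heq : a + c = b + c := ord.le_antisymm _ _ (hadm.1 _ _ _ hle) hc
  have hab : a = b := by
    ext i
    have := DFunLike.congr_fun heq i
    simp only [Finsupp.add_apply] at this
    omega
  subst hab; exact hnle (ord.le_refl _)

lemma adm_le_of_pointwise (hadm : Admissible ord) {a b : Fin n →₀ ℕ} (h : ∀ i, a i ≤ b i) : ord.le a b :=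
  hadm.2 a b h

lemma ord_wf (hadm : Admissible ord) : WellFounded ord.lt := by
  rw [RelEmbedding.wellFounded_iff_isEmpty]
  constructor
  rintro ⟨⟨f, hinj⟩, hf⟩
  obtain ⟨i, j, hij, hle⟩ := wellQuasiOrdered_le (α := Fin n →₀ ℕ)
    f
  have h1 : ord.le (f i) (f j) := adm_le_of_pointwise hadm (fun k => hle k)
  have h2 : ord.lt (f j) (f i) := by
    simp only [Function.Embedding.coeFn_mk] at hf
    exact (hf (a := j) (b := i)).mpr hij
  exact olt_irrefl _ (olt_of_le_of_lt h1 h2)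

end OrderBasics

section LmBasics
variable {R : Type*}

lemma lm_mem (f : MvPolynomial (Fin n) K) (hf : f ≠ 0) :
    leadExp ord f hf ∈ f.support := @Finset.max'_mem _ ord _ _

lemma coeff_lm_ne (f : MvPolynomial (Fin n) K) (hf : f ≠ 0) :
    coeff (leadExp ord f hf) f ≠ 0 := mem_support_iff.mp (lm_mem f hf)

lemma ole_lm {f : MvPolynomial (Fin n) K} (hf : f ≠ 0) {δ : Fin n →₀ ℕ}
    (h : δ ∈ f.support) : ord.le δ (leadExp ord f hf) := @Finset.le_max' _ ord _ _ h

lemma olt_lm_of_ne {f : MvPolynomial (Fin n) K} (hf : f ≠ 0) {δ : Fin n →₀ ℕ}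
    (h : δ ∈ f.support) (hne : δ ≠ leadExp ord f hf) :
    ord.lt δ (leadExp ord f hf) := by
  refine olt_of_le_not_le (ole_lm hf h) (fun hc => hne ?_)
  exact ord.le_antisymm _ _ (ole_lm hf h) hc

lemma coeff_zero_of_olt_lm {f : MvPolynomial (Fin n) K} (hf : f ≠ 0) {δ : Fin n →₀ ℕ}
    (h : ord.lt (leadExp ord f hf) δ) : coeff δ f = 0 := by
  by_contra hc
  exact olt_irrefl (ord := ord) _ (olt_of_le_of_lt (ole_lm hf (mem_support_iff.mpr hc)) h)

lemma lm_eq_of_support_eq {f h : MvPolynomial (Fin n) K} (hf : f ≠ 0) (hh : h ≠ 0)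
    (hs : f.support = h.support) : leadExp ord f hf = leadExp ord h hh := by
  refine ord.le_antisymm _ _ (ole_lm hh ?_) (ole_lm hf ?_)
  · rw [← hs]; exact lm_mem f hf
  · rw [hs]; exact lm_mem h hh

lemma lm_monomial {a : Fin n →₀ ℕ} {c : K} (hc : (monomial a c : MvPolynomial (Fin n) K) ≠ 0) :
    leadExp ord (monomial a c) hc = a := by
  have hc0 : c ≠ 0 := fun h => hc (by simp [h])
  have hs : (monomial a c : MvPolynomial (Fin n) K).support = {a} := by
    classical simp [support_monomial, hc0]
  refine ord.le_antisymm _ _ ?_ (ole_lm hc (by simp [hs]))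
  have := lm_mem (ord := ord) (monomial a c) hc
  rw [hs, Finset.mem_singleton] at this
  rw [this]; exact ord.le_refl _

variable (hadm : Admissible ord)

lemma coeff_mul_lm (hadm : Admissible ord) (p q : MvPolynomial (Fin n) K)
    (hp : p ≠ 0) (hq : q ≠ 0) :
    coeff (leadExp ord p hp + leadExp ord q hq) (p * q) =
      coeff (leadExp ord p hp) p * coeff (leadExp ord q hq) q := by
  classical
  rw [coeff_mul]
  refine Finset.sum_eq_single_of_mem (leadExp ord p hp, leadExp ord q hq)
    (Finset.HasAntidiagonal.mem_antidiagonal.mpr rfl) ?_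
  rintro ⟨x1, x2⟩ hmem hne
  have hsum : x1 + x2 = leadExp ord p hp + leadExp ord q hq := Finset.HasAntidiagonal.mem_antidiagonal.mp hmem
  by_contra hc
  have hx1 : x1 ∈ p.support := mem_support_iff.mpr (fun h => hc (by simp [h]))
  have hx2 : x2 ∈ q.support := mem_support_iff.mpr (fun h => hc (by simp [h]))
  have hne1 : x1 ≠ leadExp ord p hp := by
    rintro rfl
    have : x2 = leadExp ord q hq := by
      ext i; have := DFunLike.congr_fun hsum i; simp only [Finsupp.add_apply] at this; omega
    exact hne (by rw [this])
  have h1 : ord.lt (x1 + x2) (leadExp ord p hp + x2) :=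
    adm_add_lt hadm _ (olt_lm_of_ne hp hx1 hne1)
  have h2 : ord.le (leadExp ord p hp + x2) (leadExp ord p hp + leadExp ord q hq) := by
    rw [add_comm (leadExp ord p hp) x2, add_comm (leadExp ord p hp) (leadExp ord q hq)]
    exact adm_add_le hadm _ (ole_lm hq hx2)
  rw [hsum] at h1
  exact olt_irrefl (ord := ord) _ (olt_of_lt_of_le h1 h2)

lemma lm_mul (hadm : Admissible ord) {p q : MvPolynomial (Fin n) K}
    (hp : p ≠ 0) (hq : q ≠ 0) (hpq : p * q ≠ 0) :
    leadExp ord (p * q) hpq = leadExp ord p hp + leadExp ord q hq := by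
  classical
  refine ord.le_antisymm _ _ ?_ ?_
  · have hmem := lm_mem (ord := ord) (p * q) hpq
    have := MvPolynomial.support_mul p q hmem
    rw [Finset.mem_add] at this
    obtain ⟨a, ha, b, hb, hab⟩ := this
    rw [← hab]
    have h1 : ord.le (a + b) (leadExp ord p hp + b) :=
      adm_add_le hadm _ (ole_lm hp ha)
    have h2 : ord.le (leadExp ord p hp + b) (leadExp ord p hp + leadExp ord q hq) := by
      rw [add_comm (leadExp ord p hp) b, add_comm (leadExp ord p hp) (leadExp ord q hq)]
      exact adm_add_le hadm _ (ole_lm hq hb)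
    exact ord.le_trans _ _ _ h1 h2
  · refine ole_lm hpq (mem_support_iff.mpr ?_)
    rw [coeff_mul_lm hadm p q hp hq]
    exact mul_ne_zero (coeff_lm_ne p hp) (coeff_lm_ne q hq)

lemma lm_smul {f : MvPolynomial (Fin n) K} (hf : f ≠ 0) {k : K} (hk : k ≠ 0)
    (hkf : k • f ≠ 0) : leadExp ord (k • f) hkf = leadExp ord f hf := by
  refine lm_eq_of_support_eq _ _ ?_
  ext δ
  simp only [mem_support_iff, coeff_smul, smul_eq_mul]
  constructor
  · intro h hc; exact h (by rw [hc, mul_zero])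
  · intro h; exact mul_ne_zero hk h

/-- The "tail" of a polynomial: everything below the leading term. -/
lemma tail_decomp (f : MvPolynomial (Fin n) K) (hf : f ≠ 0) :
    f = monomial (leadExp ord f hf) (coeff (leadExp ord f hf) f) +
      (f - monomial (leadExp ord f hf) (coeff (leadExp ord f hf) f)) := by ring

lemma tail_supp_lt {f : MvPolynomial (Fin n) K} (hf : f ≠ 0) {δ : Fin n →₀ ℕ}
    (h : δ ∈ (f - monomial (leadExp ord f hf) (coeff (leadExp ord f hf) f)).support) :
    ord.lt δ (leadExp ord f hf) := by
  classical
  rw [mem_support_iff, coeff_sub, coeff_monomial] at h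
  by_cases hδ : δ = leadExp ord f hf
  · exfalso; apply h; rw [if_pos hδ.symm, hδ, sub_self]
  · rw [if_neg (fun hc => hδ hc.symm), sub_zero] at h
    exact olt_lm_of_ne hf (mem_support_iff.mpr h) hδ

lemma tail_lm_lt {f : MvPolynomial (Fin n) K} (hf : f ≠ 0)
    (htl : f - monomial (leadExp ord f hf) (coeff (leadExp ord f hf) f) ≠ 0) :
    ord.lt (leadExp ord _ htl) (leadExp ord f hf) :=
  tail_supp_lt hf (lm_mem _ htl)

end LmBasics
section Products
variable {s : ℕ} (g : Fin s → MvPolynomial (Fin n) K)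

lemma lm_one : leadExp ord (1 : MvPolynomial (Fin n) K) one_ne_zero = 0 := by
  have h : (1 : MvPolynomial (Fin n) K) = monomial 0 1 := by rw [← C_1, C_apply]
  rw [show leadExp ord (1 : MvPolynomial (Fin n) K) one_ne_zero
      = leadExp ord (monomial 0 1 : MvPolynomial (Fin n) K) (h ▸ one_ne_zero) from by
    congr 1 <;> rw [h]]
  exact lm_monomial _

lemma lm_pow (hadm : Admissible ord) {p : MvPolynomial (Fin n) K} (hp : p ≠ 0) (k : ℕ)
    (hpk : p ^ k ≠ 0) : leadExp ord (p ^ k) hpk = k • leadExp ord p hp := by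
  induction k with
  | zero =>
    rw [show leadExp ord (p ^ 0) hpk = leadExp ord (1 : MvPolynomial (Fin n) K) one_ne_zero
        from by congr 1 <;> rw [pow_zero], lm_one, zero_smul]
  | succ k ih =>
    have hk : p ^ k ≠ 0 := pow_ne_zero _ hp
    have h1 : p ^ (k+1) = p ^ k * p := by ring
    rw [show leadExp ord (p ^ (k+1)) hpk = leadExp ord (p ^ k * p) (h1 ▸ hpk) from by
      congr 1 <;> rw [h1], lm_mul hadm hk hp, ih hk, succ_nsmul]

/-- The product `∏ gᵢ^{βᵢ}`. -/
noncomputable def pB (β : Fin s → ℕ) : MvPolynomial (Fin n) K := ∏ i, g i ^ β i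

/-- The expected leading exponent `∑ βᵢ • Lm(gᵢ)`. -/
noncomputable def mE (hg : ∀ i, g i ≠ 0) (β : Fin s → ℕ) : Fin n →₀ ℕ :=
  ∑ i, β i • leadExp ord (g i) (hg i)

lemma pB_ne (hg : ∀ i, g i ≠ 0) (β : Fin s → ℕ) : pB g β ≠ 0 :=
  Finset.prod_ne_zero_iff.mpr (fun i _ => pow_ne_zero _ (hg i))

lemma pB_mul (β γ : Fin s → ℕ) :
    pB g (fun i => β i + γ i) = pB g β * pB g γ := by
  rw [pB, pB, pB, ← Finset.prod_mul_distrib]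
  exact Finset.prod_congr rfl (fun i _ => pow_add _ _ _)

lemma mE_add (hg : ∀ i, g i ≠ 0) (β γ : Fin s → ℕ) :
    mE (ord := ord) g hg (fun i => β i + γ i) = mE (ord := ord) g hg β + mE (ord := ord) g hg γ := by
  rw [mE, mE, mE, ← Finset.sum_add_distrib]
  exact Finset.sum_congr rfl (fun i _ => add_smul _ _ _)

lemma lm_pB (hadm : Admissible ord) (hg : ∀ i, g i ≠ 0) (β : Fin s → ℕ) :
    leadExp ord (pB g β) (pB_ne g hg β) = mE (ord := ord) g hg β := by
  classical
  have key : ∀ A : Finset (Fin s), ∀ hA : (∏ i ∈ A, g i ^ β i) ≠ 0,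
      leadExp ord (∏ i ∈ A, g i ^ β i) hA = ∑ i ∈ A, β i • leadExp ord (g i) (hg i) := by
    intro A
    induction A using Finset.induction_on with
    | empty =>
      intro hA
      rw [show leadExp ord (∏ i ∈ (∅ : Finset (Fin s)), g i ^ β i) hA
          = leadExp ord (1 : MvPolynomial (Fin n) K) one_ne_zero from by
        congr 1 <;> rw [Finset.prod_empty], lm_one, Finset.sum_empty]
    | @insert a A' hx ih =>
      intro hA
      have h1 : (∏ i ∈ insert a A', g i ^ β i) = g a ^ β a * ∏ i ∈ A', g i ^ β i :=
        Finset.prod_insert hx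
      have hga : g a ^ β a ≠ 0 := pow_ne_zero _ (hg a)
      have hA' : (∏ i ∈ A', g i ^ β i) ≠ 0 :=
        Finset.prod_ne_zero_iff.mpr (fun i _ => pow_ne_zero _ (hg i))
      rw [show leadExp ord (∏ i ∈ insert a A', g i ^ β i) hA
          = leadExp ord (g a ^ β a * ∏ i ∈ A', g i ^ β i) (h1 ▸ hA) from by
        congr 1 <;> rw [h1], lm_mul hadm hga hA', lm_pow hadm (hg a) _ hga, ih hA',
        Finset.sum_insert hx]
  exact key Finset.univ _

lemma mE_apply (hg : ∀ i, g i ≠ 0) (β : Fin s → ℕ) (k : Fin n) :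
    mE (ord := ord) g hg β k = ∑ i, β i * leadExp ord (g i) (hg i) k := by
  rw [mE, Finsupp.finset_sum_apply]
  exact Finset.sum_congr rfl (fun i _ => by rw [Finsupp.smul_apply, smul_eq_mul])

lemma mE_disjoint (hg : ∀ i, g i ≠ 0) (hcop : ∀ i j, i ≠ j → ∀ k,
      leadExp ord (g i) (hg i) k = 0 ∨ leadExp ord (g j) (hg j) k = 0)
    {β γ : Fin s → ℕ} (hdisj : ∀ i, β i = 0 ∨ γ i = 0) (k : Fin n) :
    mE (ord := ord) g hg β k = 0 ∨ mE (ord := ord) g hg γ k = 0 := by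
  by_contra hc
  push_neg at hc
  obtain ⟨h1, h2⟩ := hc
  rw [mE_apply] at h1 h2
  obtain ⟨i, _, hi⟩ := Finset.exists_ne_zero_of_sum_ne_zero h1
  obtain ⟨j, _, hj⟩ := Finset.exists_ne_zero_of_sum_ne_zero h2
  have hβi : β i ≠ 0 := fun h => hi (by rw [h, zero_mul])
  have hγj : γ j ≠ 0 := fun h => hj (by rw [h, zero_mul])
  have hij : i ≠ j := by
    rintro rfl
    rcases hdisj i with h | h
    · exact hβi h
    · exact hγj h
  rcases hcop i j hij k with h | h
  · exact hi (by rw [h, mul_zero])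
  · exact hj (by rw [h, mul_zero])

end Products
section Closure
variable {s : ℕ} (g : Fin s → MvPolynomial (Fin n) K)

/-- Elements `c * pB g β` (weight `t`) whose leading exponent satisfies `pred`. -/
def SS (t : ℕ) (pred : (Fin n →₀ ℕ) → Prop) : Set (MvPolynomial (Fin n) K) :=
  {h | (∃ c β, (∑ i, β i) = t ∧ h = c * pB g β) ∧ ∀ hh : h ≠ 0, pred (leadExp ord h hh)}

variable {t : ℕ}

lemma exists_wt (hs : 0 < s) (t : ℕ) : ∃ β : Fin s → ℕ, (∑ i, β i) = t := by
  classical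
  refine ⟨fun i => if i = ⟨0, hs⟩ then t else 0, ?_⟩
  simp [Finset.sum_ite_eq']

lemma zero_mem_SS (hs : 0 < s) (pred : (Fin n →₀ ℕ) → Prop) :
    (0 : MvPolynomial (Fin n) K) ∈ SS (ord := ord) g t pred := by
  obtain ⟨β, hβ⟩ := exists_wt hs t
  exact ⟨⟨0, β, hβ, by rw [zero_mul]⟩, fun hh => absurd rfl hh⟩

lemma SS_mono {p1 p2 : (Fin n →₀ ℕ) → Prop} (h : ∀ δ, p1 δ → p2 δ) :
    SS (ord := ord) g t p1 ⊆ SS (ord := ord) g t p2 :=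
  fun x hx => ⟨hx.1, fun hh => h _ (hx.2 hh)⟩

lemma smul_mem_closure_SS {pred : (Fin n →₀ ℕ) → Prop} (hs : 0 < s) (k : K)
    {f : MvPolynomial (Fin n) K} (hf : f ∈ AddSubmonoid.closure (SS (ord := ord) g t pred)) :
    k • f ∈ AddSubmonoid.closure (SS (ord := ord) g t pred) := by
  by_cases hk : k = 0
  · rw [hk, zero_smul]; exact AddSubmonoid.zero_mem _
  refine AddSubmonoid.closure_induction ?_ ?_ ?_ hf
  · rintro x ⟨⟨c, β, hβ, rfl⟩, hpred⟩
    refine AddSubmonoid.subset_closure ⟨⟨k • c, β, hβ, (smul_mul_assoc k c _).symm⟩, ?_⟩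
    intro hh
    have hx : c * pB g β ≠ 0 := fun h => hh (by rw [h, smul_zero])
    rw [lm_smul hx hk]
    exact hpred hx
  · rw [smul_zero]; exact AddSubmonoid.zero_mem _
  · intro x y _ _ hx hy
    rw [smul_add]; exact AddSubmonoid.add_mem _ hx hy

lemma mul_mem_closure_SS (hs : 0 < s) (r : MvPolynomial (Fin n) K)
    {f : MvPolynomial (Fin n) K}
    (hf : f ∈ AddSubmonoid.closure (SS (ord := ord) g t (fun _ => True))) :
    r * f ∈ AddSubmonoid.closure (SS (ord := ord) g t (fun _ => True)) := by
  refine AddSubmonoid.closure_induction ?_ ?_ ?_ hf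
  · rintro x ⟨⟨c, β, hβ, rfl⟩, -⟩
    exact AddSubmonoid.subset_closure ⟨⟨r * c, β, hβ, (mul_assoc r c _).symm⟩, fun _ => trivial⟩
  · rw [mul_zero]; exact AddSubmonoid.zero_mem _
  · intro x y _ _ hx hy
    rw [mul_add]; exact AddSubmonoid.add_mem _ hx hy

lemma supp_pred_of_mem {pred : (Fin n →₀ ℕ) → Prop} {f : MvPolynomial (Fin n) K}
    (hf : f ∈ AddSubmonoid.closure (SS (ord := ord) g t pred)) :
    ∀ γ ∈ f.support, ∃ δ', pred δ' ∧ ord.le γ δ' := by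
  classical
  refine AddSubmonoid.closure_induction ?_ ?_ ?_ hf
  · rintro x ⟨-, hpred⟩ γ hγ
    have hx : x ≠ 0 := fun h => by simp [h] at hγ
    exact ⟨leadExp ord x hx, hpred hx, ole_lm hx hγ⟩
  · intro γ hγ; simp at hγ
  · intro x y _ _ hx hy γ hγ
    rcases Finset.mem_union.mp (MvPolynomial.support_add hγ) with h | h
    · exact hx γ h
    · exact hy γ h

lemma coeff_zero_of_closure_lt {δ : Fin n →₀ ℕ} {f : MvPolynomial (Fin n) K}
    (hf : f ∈ AddSubmonoid.closure (SS (ord := ord) g t (fun x => ord.lt x δ))) :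
    coeff δ f = 0 := by
  by_contra hc
  obtain ⟨δ', hδ', hle⟩ := supp_pred_of_mem g hf δ (mem_support_iff.mpr hc)
  exact olt_irrefl (ord := ord) _ (olt_of_le_of_lt hle hδ')

lemma lm_le_of_closure_le {δ : Fin n →₀ ℕ} {f : MvPolynomial (Fin n) K} (hf0 : f ≠ 0)
    (hf : f ∈ AddSubmonoid.closure (SS (ord := ord) g t (fun x => ord.le x δ))) :
    ord.le (leadExp ord f hf0) δ := by
  obtain ⟨δ', hδ', hle⟩ := supp_pred_of_mem g hf _ (lm_mem f hf0)
  exact ord.le_trans _ _ _ hle hδ'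

lemma extract_of_coeff_ne (hadm : Admissible ord) (hg : ∀ i, g i ≠ 0) {δ : Fin n →₀ ℕ}
    {f : MvPolynomial (Fin n) K}
    (hf : f ∈ AddSubmonoid.closure (SS (ord := ord) g t (fun x => ord.le x δ)))
    (hc : coeff δ f ≠ 0) :
    ∃ β : Fin s → ℕ, (∑ i, β i) = t ∧ ∀ k, mE (ord := ord) g hg β k ≤ δ k := by
  classical
  revert hc
  refine AddSubmonoid.closure_induction ?_ ?_ ?_ hf
  · rintro x ⟨⟨c, β, hβ, rfl⟩, hpred⟩ hcoeff
    have hx : c * pB g β ≠ 0 := fun h => hcoeff (by rw [h, coeff_zero])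
    have hc0 : c ≠ 0 := fun h => hx (by rw [h, zero_mul])
    have hlm : leadExp ord (c * pB g β) hx
        = leadExp ord c hc0 + mE (ord := ord) g hg β := by
      rw [lm_mul hadm hc0 (pB_ne g hg β), lm_pB g hadm hg β]
    have h1 : ord.le δ (leadExp ord (c * pB g β) hx) :=
      ole_lm hx (mem_support_iff.mpr hcoeff)
    have h2 : leadExp ord (c * pB g β) hx = δ :=
      ord.le_antisymm _ _ (hpred hx) h1
    refine ⟨β, hβ, fun k => ?_⟩
    have := DFunLike.congr_fun (hlm ▸ h2) k
    simp only [Finsupp.add_apply] at this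
    omega
  · intro h; simp at h
  · intro x y _ _ hx hy hxy
    rcases em (coeff δ x = 0) with h | h
    · exact hy (fun h' => hxy (by rw [coeff_add, h, h', add_zero]))
    · exact hx h

lemma bound_extract {pred : (Fin n →₀ ℕ) → Prop} (hs : 0 < s) {f : MvPolynomial (Fin n) K}
    (hf : f ∈ AddSubmonoid.closure (SS (ord := ord) g t pred)) :
    f = 0 ∨ ∃ δ'', pred δ'' ∧
      f ∈ AddSubmonoid.closure (SS (ord := ord) g t (fun x => ord.le x δ'')) := by
  refine AddSubmonoid.closure_induction ?_ ?_ ?_ hf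
  · rintro x hx
    by_cases hx0 : x = 0
    · exact Or.inl hx0
    refine Or.inr ⟨leadExp ord x hx0, hx.2 hx0, AddSubmonoid.subset_closure ⟨hx.1, ?_⟩⟩
    intro hh
    rw [show leadExp ord x hh = leadExp ord x hx0 from rfl]
    exact ord.le_refl _
  · exact Or.inl rfl
  · rintro x y _ _ (rfl | ⟨δx, hpx, hx⟩) hy
    · simpa using hy
    rcases hy with rfl | ⟨δy, hpy, hy⟩
    · rw [add_zero]; exact Or.inr ⟨δx, hpx, hx⟩
    rcases ole_total (ord := ord) δx δy with h | h
    · refine Or.inr ⟨δy, hpy, AddSubmonoid.add_mem _ ?_ hy⟩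
      exact AddSubmonoid.closure_mono (SS_mono g (fun δ' h' => ord.le_trans _ _ _ h' h)) hx
    · refine Or.inr ⟨δx, hpx, AddSubmonoid.add_mem _ hx ?_⟩
      exact AddSubmonoid.closure_mono (SS_mono g (fun δ' h' => ord.le_trans _ _ _ h' h)) hy

end Closure
section Pair
variable {s t : ℕ} (g : Fin s → MvPolynomial (Fin n) K)

lemma mem_closure_term (hadm : Admissible ord) (hg : ∀ i, g i ≠ 0) (hs : 0 < s)
    {δ : Fin n →₀ ℕ} {β : Fin s → ℕ} (hw : (∑ i, β i) = t) (c : MvPolynomial (Fin n) K)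
    (hlt : ∀ hc : c ≠ 0, ord.lt (leadExp ord c hc + mE (ord := ord) g hg β) δ) :
    c * pB g β ∈ AddSubmonoid.closure (SS (ord := ord) g t (fun x => ord.lt x δ)) := by
  by_cases hc : c = 0
  · rw [hc, zero_mul]; exact AddSubmonoid.zero_mem _
  refine AddSubmonoid.subset_closure ⟨⟨c, β, hw, rfl⟩, fun hh => ?_⟩
  rw [lm_mul hadm hc (pB_ne g hg β), lm_pB g hadm hg β]
  exact hlt hc

lemma pair_claim (hadm : Admissible ord) (hg : ∀ i, g i ≠ 0) (hs : 0 < s)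
    (hcop : ∀ i j, i ≠ j → ∀ k,
      leadExp ord (g i) (hg i) k = 0 ∨ leadExp ord (g j) (hg j) k = 0)
    {δ : Fin n →₀ ℕ} {βx βy : Fin s → ℕ}
    (hwx : (∑ i, βx i) = t) (hwy : (∑ i, βy i) = t) {a b : Fin n →₀ ℕ}
    (ha : a + mE (ord := ord) g hg βx = δ) (hb : b + mE (ord := ord) g hg βy = δ)
    {e e' : K}
    (hee : e * coeff (mE (ord := ord) g hg βx) (pB g βx)
         = e' * coeff (mE (ord := ord) g hg βy) (pB g βy)) :
    monomial a e * pB g βx - monomial b e' * pB g βy ∈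
      AddSubmonoid.closure (SS (ord := ord) g t (fun x => ord.lt x δ)) := by
  classical
  set η : Fin s → ℕ := fun i => min (βx i) (βy i) with hη
  set β' : Fin s → ℕ := fun i => βx i - η i with hβ'
  set γ' : Fin s → ℕ := fun i => βy i - η i with hγ'
  have hβx : βx = fun i => η i + β' i := by
    funext i; simp only [hη, hβ', hγ']; omega
  have hβy : βy = fun i => η i + γ' i := by
    funext i; simp only [hη, hβ', hγ']; omega
  set E := pB g η with hE
  set P := pB g β' with hP
  set Q := pB g γ' with hQ
  have hEP : pB g βx = E * P := by rw [hE, hP, ← pB_mul, ← hβx]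
  have hEQ : pB g βy = E * Q := by rw [hE, hQ, ← pB_mul, ← hβy]
  have hmx : mE (ord := ord) g hg βx = mE (ord := ord) g hg η + mE (ord := ord) g hg β' := by
    rw [← mE_add, ← hβx]
  have hmy : mE (ord := ord) g hg βy = mE (ord := ord) g hg η + mE (ord := ord) g hg γ' := by
    rw [← mE_add, ← hβy]
  have hdisj : ∀ i, β' i = 0 ∨ γ' i = 0 := by
    intro i; simp only [hβ', hγ', hη]; omega
  have hk := mE_disjoint (ord := ord) g hg hcop hdisj
  -- cancel mE η
  have heq : ∀ k, a k + mE (ord := ord) g hg β' k = b k + mE (ord := ord) g hg γ' k := by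
    intro k
    have h1 := DFunLike.congr_fun (ha.trans hb.symm) k
    rw [hmx, hmy] at h1
    simp only [Finsupp.add_apply] at h1
    omega
  have hle : ∀ k, mE (ord := ord) g hg γ' k ≤ a k := by
    intro k
    have h2 := heq k
    rcases hk k with h | h <;> omega
  set c : Fin n →₀ ℕ := a - mE (ord := ord) g hg γ' with hc
  have hac : a = c + mE (ord := ord) g hg γ' := by
    ext k
    simp only [hc, Finsupp.add_apply, Finsupp.tsub_apply]
    have := hle k; omega
  have hbc : b = c + mE (ord := ord) g hg β' := by
    ext k
    have h1 := heq k
    have h2 := DFunLike.congr_fun hac k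
    simp only [Finsupp.add_apply, Finsupp.tsub_apply] at h1 h2 ⊢
    omega
  -- leading coefficients
  set lcP : K := coeff (mE (ord := ord) g hg β') P with hlcP
  set lcQ : K := coeff (mE (ord := ord) g hg γ') Q with hlcQ
  set lcE : K := coeff (mE (ord := ord) g hg η) E with hlcE
  have hlmP : leadExp ord P (pB_ne g hg β') = mE (ord := ord) g hg β' := lm_pB g hadm hg β'
  have hlmQ : leadExp ord Q (pB_ne g hg γ') = mE (ord := ord) g hg γ' := lm_pB g hadm hg γ'
  have hlmE : leadExp ord E (pB_ne g hg η) = mE (ord := ord) g hg η := lm_pB g hadm hg η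
  have hlcP0 : lcP ≠ 0 := by rw [hlcP, ← hlmP]; exact coeff_lm_ne _ _
  have hlcQ0 : lcQ ≠ 0 := by rw [hlcQ, ← hlmQ]; exact coeff_lm_ne _ _
  have hlcE0 : lcE ≠ 0 := by rw [hlcE, ← hlmE]; exact coeff_lm_ne _ _
  -- lead coeff of products
  have hcx : coeff (mE (ord := ord) g hg βx) (pB g βx) = lcE * lcP := by
    rw [hEP, hmx, ← hlmE, ← hlmP, coeff_mul_lm hadm E P (pB_ne g hg η) (pB_ne g hg β'),
      hlmE, hlmP]
  have hcy : coeff (mE (ord := ord) g hg βy) (pB g βy) = lcE * lcQ := by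
    rw [hEQ, hmy, ← hlmE, ← hlmQ, coeff_mul_lm hadm E Q (pB_ne g hg η) (pB_ne g hg γ'),
      hlmE, hlmQ]
  have helc : e * lcP = e' * lcQ := by
    rw [hcx, hcy] at hee
    have h3 : lcE * (e * lcP) = lcE * (e' * lcQ) := by linear_combination hee
    exact mul_left_cancel₀ hlcE0 h3
  -- the correction polynomials
  set Qbar : MvPolynomial (Fin n) K :=
    monomial (mE (ord := ord) g hg γ') 1 - C lcQ⁻¹ * Q with hQbar
  set Pbar : MvPolynomial (Fin n) K :=
    monomial (mE (ord := ord) g hg β') 1 - C lcP⁻¹ * P with hPbar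
  have hCC : (C (e * lcQ⁻¹) : MvPolynomial (Fin n) K) = C (e' * lcP⁻¹) := by
    congr 1
    field_simp
    linear_combination helc
  -- key algebraic identity
  have hkey : monomial a e * pB g βx - monomial b e' * pB g βy
      = (C e * monomial c 1 * Qbar) * pB g βx + (C (-e') * monomial c 1 * Pbar) * pB g βy := by
    rw [hEP, hEQ, hQbar, hPbar, hac, hbc,
      show (monomial (c + mE (ord := ord) g hg γ') e : MvPolynomial (Fin n) K)
        = monomial c e * monomial (mE (ord := ord) g hg γ') 1 from by
          rw [monomial_mul, mul_one],
      show (monomial (c + mE (ord := ord) g hg β') e' : MvPolynomial (Fin n) K)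
        = monomial c e' * monomial (mE (ord := ord) g hg β') 1 from by
          rw [monomial_mul, mul_one],
      show (monomial c e : MvPolynomial (Fin n) K) = C e * monomial c 1 from
        (by rw [C_mul_monomial, mul_one] :
          (C e * monomial c 1 : MvPolynomial (Fin n) K) = monomial c e).symm,
      show (monomial c e' : MvPolynomial (Fin n) K) = C e' * monomial c 1 from
        (by rw [C_mul_monomial, mul_one] :
          (C e' * monomial c 1 : MvPolynomial (Fin n) K) = monomial c e').symm,
      map_neg]
    have expand : (C e * C lcQ⁻¹ : MvPolynomial (Fin n) K) = C e' * C lcP⁻¹ := by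
      rw [← map_mul, ← map_mul, hCC]
    linear_combination (monomial c 1 * E * P * Q) * expand
  rw [hkey]
  refine AddSubmonoid.add_mem _ ?_ ?_
  · -- first term
    refine mem_closure_term g hadm hg hs hwx _ (fun hc0 => ?_)
    have he0 : e ≠ 0 := fun h => hc0 (by rw [h, map_zero, zero_mul, zero_mul])
    have hQbar0 : Qbar ≠ 0 := fun h => hc0 (by rw [h, mul_zero])
    -- Qbar is (minus) the tail of lcQ⁻¹ • Q
    have hN : (lcQ⁻¹ • Q : MvPolynomial (Fin n) K) ≠ 0 :=
      smul_ne_zero (inv_ne_zero hlcQ0) (pB_ne g hg γ')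
    have hlmN : leadExp ord (lcQ⁻¹ • Q) hN = mE (ord := ord) g hg γ' := by
      rw [lm_smul (pB_ne g hg γ') (inv_ne_zero hlcQ0), hlmQ]
    have hcoefN : coeff (leadExp ord (lcQ⁻¹ • Q) hN) (lcQ⁻¹ • Q) = 1 := by
      rw [hlmN, coeff_smul, ← hlcQ, smul_eq_mul, inv_mul_cancel₀ hlcQ0]
    have htail : Qbar = -(lcQ⁻¹ • Q - monomial (leadExp ord (lcQ⁻¹ • Q) hN)
        (coeff (leadExp ord (lcQ⁻¹ • Q) hN) (lcQ⁻¹ • Q))) := by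
      rw [hcoefN, hlmN, hQbar, smul_eq_C_mul]; ring
    have htail0 : (lcQ⁻¹ • Q - monomial (leadExp ord (lcQ⁻¹ • Q) hN)
        (coeff (leadExp ord (lcQ⁻¹ • Q) hN) (lcQ⁻¹ • Q))) ≠ 0 := by
      intro h; apply hQbar0; rw [htail, h, neg_zero]
    have hlmQbar : leadExp ord Qbar hQbar0
        = leadExp ord _ htail0 := by
      refine lm_eq_of_support_eq _ _ ?_
      rw [htail, support_neg]
    have hQbarlt : ord.lt (leadExp ord Qbar hQbar0) (mE (ord := ord) g hg γ') := by
      rw [hlmQbar, ← hlmN]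
      exact tail_lm_lt hN htail0
    -- compute leading exponent of the coefficient
    have hmon : (C e * monomial c 1 : MvPolynomial (Fin n) K) = monomial c e := by
      rw [C_mul_monomial, mul_one]
    have hmon0 : (monomial c e : MvPolynomial (Fin n) K) ≠ 0 :=
      fun h => he0 (MvPolynomial.monomial_eq_zero.mp h)
    have hc0' : C e * monomial c 1 * Qbar ≠ 0 := hc0
    have hlm1 : leadExp ord (C e * monomial c 1 * Qbar) hc0'
        = c + leadExp ord Qbar hQbar0 := by
      rw [show leadExp ord (C e * monomial c 1 * Qbar) hc0'
          = leadExp ord (monomial c e * Qbar) (by rw [← hmon]; exact hc0') from by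
        congr 1 <;> rw [hmon],
        lm_mul hadm hmon0 hQbar0, lm_monomial hmon0]
    rw [hlm1]
    have hstep : ord.lt (leadExp ord Qbar hQbar0 + (c + mE (ord := ord) g hg βx))
        (mE (ord := ord) g hg γ' + (c + mE (ord := ord) g hg βx)) :=
      adm_add_lt hadm _ hQbarlt
    have e1 : c + leadExp ord Qbar hQbar0 + mE (ord := ord) g hg βx
        = leadExp ord Qbar hQbar0 + (c + mE (ord := ord) g hg βx) := by
      ext k; simp only [Finsupp.add_apply]; ring
    have e2 : mE (ord := ord) g hg γ' + (c + mE (ord := ord) g hg βx) = δ := by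
      rw [← ha, hac]; ext k; simp only [Finsupp.add_apply]; ring
    rw [e1, ← e2]
    exact hstep
  · -- second term, symmetric
    refine mem_closure_term g hadm hg hs hwy _ (fun hc0 => ?_)
    have he0 : (-e' : K) ≠ 0 := fun h => hc0 (by rw [h, map_zero, zero_mul, zero_mul])
    have hPbar0 : Pbar ≠ 0 := fun h => hc0 (by rw [h, mul_zero])
    have hN : (lcP⁻¹ • P : MvPolynomial (Fin n) K) ≠ 0 :=
      smul_ne_zero (inv_ne_zero hlcP0) (pB_ne g hg β')
    have hlmN : leadExp ord (lcP⁻¹ • P) hN = mE (ord := ord) g hg β' := by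
      rw [lm_smul (pB_ne g hg β') (inv_ne_zero hlcP0), hlmP]
    have hcoefN : coeff (leadExp ord (lcP⁻¹ • P) hN) (lcP⁻¹ • P) = 1 := by
      rw [hlmN, coeff_smul, ← hlcP, smul_eq_mul, inv_mul_cancel₀ hlcP0]
    have htail : Pbar = -(lcP⁻¹ • P - monomial (leadExp ord (lcP⁻¹ • P) hN)
        (coeff (leadExp ord (lcP⁻¹ • P) hN) (lcP⁻¹ • P))) := by
      rw [hcoefN, hlmN, hPbar, smul_eq_C_mul]; ring
    have htail0 : (lcP⁻¹ • P - monomial (leadExp ord (lcP⁻¹ • P) hN)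
        (coeff (leadExp ord (lcP⁻¹ • P) hN) (lcP⁻¹ • P))) ≠ 0 := by
      intro h; apply hPbar0; rw [htail, h, neg_zero]
    have hlmPbar : leadExp ord Pbar hPbar0 = leadExp ord _ htail0 := by
      refine lm_eq_of_support_eq _ _ ?_
      rw [htail, support_neg]
    have hPbarlt : ord.lt (leadExp ord Pbar hPbar0) (mE (ord := ord) g hg β') := by
      rw [hlmPbar, ← hlmN]
      exact tail_lm_lt hN htail0
    have hmon : (C (-e') * monomial c 1 : MvPolynomial (Fin n) K) = monomial c (-e') := by
      rw [C_mul_monomial, mul_one]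
    have hmon0 : (monomial c (-e') : MvPolynomial (Fin n) K) ≠ 0 :=
      fun h => he0 (MvPolynomial.monomial_eq_zero.mp h)
    have hc0' : C (-e') * monomial c 1 * Pbar ≠ 0 := hc0
    have hlm1 : leadExp ord (C (-e') * monomial c 1 * Pbar) hc0'
        = c + leadExp ord Pbar hPbar0 := by
      rw [show leadExp ord (C (-e') * monomial c 1 * Pbar) hc0'
          = leadExp ord (monomial c (-e') * Pbar) (by rw [← hmon]; exact hc0') from by
        congr 1 <;> rw [hmon],
        lm_mul hadm hmon0 hPbar0, lm_monomial hmon0]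
    rw [hlm1]
    have hstep : ord.lt (leadExp ord Pbar hPbar0 + (c + mE (ord := ord) g hg βy))
        (mE (ord := ord) g hg β' + (c + mE (ord := ord) g hg βy)) :=
      adm_add_lt hadm _ hPbarlt
    have e1 : c + leadExp ord Pbar hPbar0 + mE (ord := ord) g hg βy
        = leadExp ord Pbar hPbar0 + (c + mE (ord := ord) g hg βy) := by
      ext k; simp only [Finsupp.add_apply]; ring
    have e2 : mE (ord := ord) g hg β' + (c + mE (ord := ord) g hg βy) = δ := by
      rw [← hb, hbc]; ext k; simp only [Finsupp.add_apply]; ring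
    rw [e1, ← e2]
    exact hstep

end Pair
section Telescope
variable {s t : ℕ} (g : Fin s → MvPolynomial (Fin n) K)

lemma olt_of_ole_ne {a b : Fin n →₀ ℕ} (h : ord.le a b) (hne : a ≠ b) : ord.lt a b :=
  olt_of_le_not_le h (fun hc => hne (ord.le_antisymm _ _ h hc))

lemma decomp (hadm : Admissible ord) (hg : ∀ i, g i ≠ 0) (hs : 0 < s)
    {δ : Fin n →₀ ℕ} {f : MvPolynomial (Fin n) K}
    (hf : f ∈ AddSubmonoid.closure (SS (ord := ord) g t (fun x => ord.le x δ))) :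
    ∃ (l : List ((Fin n →₀ ℕ) × K × (Fin s → ℕ))) (f₀ : MvPolynomial (Fin n) K),
      f₀ ∈ AddSubmonoid.closure (SS (ord := ord) g t (fun x => ord.lt x δ)) ∧
      f = (l.map fun x => monomial x.1 x.2.1 * pB g x.2.2).sum + f₀ ∧
      ∀ x ∈ l, (∑ i, x.2.2 i) = t ∧ x.1 + mE (ord := ord) g hg x.2.2 = δ := by
  classical
  refine AddSubmonoid.closure_induction ?_ ?_ ?_ hf
  · rintro x ⟨⟨c, β, hβ, rfl⟩, hpred⟩
    by_cases hx : c * pB g β = 0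
    · exact ⟨[], 0, AddSubmonoid.zero_mem _, by simp [hx], by simp⟩
    have hc0 : c ≠ 0 := fun h => hx (by rw [h, zero_mul])
    have hlm : leadExp ord (c * pB g β) hx
        = leadExp ord c hc0 + mE (ord := ord) g hg β := by
      rw [lm_mul hadm hc0 (pB_ne g hg β), lm_pB g hadm hg β]
    by_cases heq : leadExp ord (c * pB g β) hx = δ
    · -- split off the leading term
      refine ⟨[(leadExp ord c hc0, coeff (leadExp ord c hc0) c, β)],
        (c - monomial (leadExp ord c hc0) (coeff (leadExp ord c hc0) c)) * pB g β,
        ?_, by simp; ring, ?_⟩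
      · refine mem_closure_term g hadm hg hs hβ _ (fun hc' => ?_)
        have h1 : ord.lt (leadExp ord _ hc') (leadExp ord c hc0) := tail_lm_lt hc0 hc'
        have h2 : ord.lt (leadExp ord _ hc' + mE (ord := ord) g hg β)
            (leadExp ord c hc0 + mE (ord := ord) g hg β) := adm_add_lt hadm _ h1
        rw [← hlm, heq] at h2
        exact h2
      · rintro y hy
        rw [List.mem_singleton] at hy
        subst hy
        exact ⟨hβ, by rw [← hlm, heq]⟩
    · refine ⟨[], c * pB g β, AddSubmonoid.subset_closure ⟨⟨c, β, hβ, rfl⟩, ?_⟩, by simp, by simp⟩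
      intro hh
      exact olt_of_ole_ne (hpred hh) heq
  · exact ⟨[], 0, AddSubmonoid.zero_mem _, by simp, by simp⟩
  · rintro x y _ _ ⟨lx, fx, hfx, hxeq, hxent⟩ ⟨ly, fy, hfy, hyeq, hyent⟩
    refine ⟨lx ++ ly, fx + fy, AddSubmonoid.add_mem _ hfx hfy, ?_, ?_⟩
    · rw [List.map_append, List.sum_append, hxeq, hyeq]; ring
    · intro z hz
      rcases List.mem_append.mp hz with h | h
      · exact hxent z h
      · exact hyent z h

lemma telescope (hadm : Admissible ord) (hg : ∀ i, g i ≠ 0) (hs : 0 < s)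
    (hcop : ∀ i j, i ≠ j → ∀ k,
      leadExp ord (g i) (hg i) k = 0 ∨ leadExp ord (g j) (hg j) k = 0)
    {δ : Fin n →₀ ℕ} :
    ∀ (N : ℕ) (l : List ((Fin n →₀ ℕ) × K × (Fin s → ℕ))), l.length ≤ N →
    (∀ x ∈ l, (∑ i, x.2.2 i) = t ∧ x.1 + mE (ord := ord) g hg x.2.2 = δ) →
    (l.map (fun x => x.2.1 * coeff (mE (ord := ord) g hg x.2.2) (pB g x.2.2))).sum = 0 →
    (l.map fun x => monomial x.1 x.2.1 * pB g x.2.2).sum ∈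
      AddSubmonoid.closure (SS (ord := ord) g t (fun x => ord.lt x δ)) := by
  intro N
  induction N with
  | zero =>
    intro l hlen _ _
    rw [List.length_eq_zero_iff.mp (Nat.le_zero.mp hlen)]
    simp only [List.map_nil, List.sum_nil]
    exact AddSubmonoid.zero_mem _
  | succ N ih =>
    intro l hlen hent hsum
    match l with
    | [] => simp only [List.map_nil, List.sum_nil]; exact AddSubmonoid.zero_mem _
    | [x] =>
      simp only [List.map_cons, List.map_nil, List.sum_cons, List.sum_nil, add_zero] at hsum ⊢
      have hlc : coeff (mE (ord := ord) g hg x.2.2) (pB g x.2.2) ≠ 0 := by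
        rw [← lm_pB g hadm hg x.2.2]
        exact coeff_lm_ne _ _
      have hx0 : x.2.1 = 0 := by
        rcases mul_eq_zero.mp hsum with h | h
        · exact h
        · exact absurd h hlc
      rw [hx0, monomial_zero, zero_mul]
      exact AddSubmonoid.zero_mem _
    | x :: y :: rest =>
      obtain ⟨hwx, hax⟩ := hent x (by simp)
      obtain ⟨hwy, hay⟩ := hent y (by simp)
      set lcx : K := coeff (mE (ord := ord) g hg x.2.2) (pB g x.2.2) with hlcx
      set lcy : K := coeff (mE (ord := ord) g hg y.2.2) (pB g y.2.2) with hlcy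
      have hlcy0 : lcy ≠ 0 := by
        rw [hlcy, ← lm_pB g hadm hg y.2.2]; exact coeff_lm_ne _ _
      set q : K := x.2.1 * lcx * lcy⁻¹ with hq
      -- the pair difference
      have hpair : monomial x.1 x.2.1 * pB g x.2.2 - monomial y.1 q * pB g y.2.2 ∈
          AddSubmonoid.closure (SS (ord := ord) g t (fun z => ord.lt z δ)) := by
        refine pair_claim g hadm hg hs hcop hwx hwy hax hay ?_
        rw [← hlcx, ← hlcy, hq]
        field_simp
      -- the new list
      set y' : (Fin n →₀ ℕ) × K × (Fin s → ℕ) := (y.1, y.2.1 + q, y.2.2) with hy'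
      have hrest : (List.map (fun z => monomial z.1 z.2.1 * pB g z.2.2) (y' :: rest)).sum ∈
          AddSubmonoid.closure (SS (ord := ord) g t (fun z => ord.lt z δ)) := by
        refine ih (y' :: rest) ?_ ?_ ?_
        · simpa using Nat.lt_of_succ_le (Nat.succ_le_succ_iff.mp (by simpa using hlen))
        · intro z hz
          rcases List.mem_cons.mp hz with h | h
          · subst h; exact ⟨hwy, hay⟩
          · exact hent z (by simp [h])
        · simp only [List.map_cons, List.sum_cons] at hsum ⊢
          have : (y.2.1 + q) * lcy = x.2.1 * lcx + y.2.1 * lcy := by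
            rw [hq]; field_simp; ring
          rw [← hlcy, this]
          rw [← hlcx, ← hlcy] at hsum
          linear_combination hsum
      have hkey : (List.map (fun z => monomial z.1 z.2.1 * pB g z.2.2) (x :: y :: rest)).sum
          = (monomial x.1 x.2.1 * pB g x.2.2 - monomial y.1 q * pB g y.2.2)
            + (List.map (fun z => monomial z.1 z.2.1 * pB g z.2.2) (y' :: rest)).sum := by
        simp only [List.map_cons, List.sum_cons, hy']
        have hmadd : (monomial y.1 (y.2.1 + q) : MvPolynomial (Fin n) K)
            = monomial y.1 y.2.1 + monomial y.1 q := by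
          rw [← map_add]
        rw [hmadd]
        ring
      rw [hkey]
      exact AddSubmonoid.add_mem _ hpair hrest

end Telescope
section Main
variable {s t : ℕ} (g : Fin s → MvPolynomial (Fin n) K)

lemma main_ind (hadm : Admissible ord) (hg : ∀ i, g i ≠ 0) (hs : 0 < s)
    (hcop : ∀ i j, i ≠ j → ∀ k,
      leadExp ord (g i) (hg i) k = 0 ∨ leadExp ord (g j) (hg j) k = 0)
    (δ : Fin n →₀ ℕ) :
    ∀ (f : MvPolynomial (Fin n) K) (hf0 : f ≠ 0),
      f ∈ AddSubmonoid.closure (SS (ord := ord) g t (fun x => ord.le x δ)) →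
      ∃ β : Fin s → ℕ, (∑ i, β i) = t ∧
        ∀ k, mE (ord := ord) g hg β k ≤ leadExp ord f hf0 k := by
  refine (ord_wf hadm).induction
    (C := fun δ => ∀ (f : MvPolynomial (Fin n) K) (hf0 : f ≠ 0),
      f ∈ AddSubmonoid.closure (SS (ord := ord) g t (fun x => ord.le x δ)) →
      ∃ β : Fin s → ℕ, (∑ i, β i) = t ∧
        ∀ k, mE (ord := ord) g hg β k ≤ leadExp ord f hf0 k) δ ?_
  clear δ
  intro δ IH f hf0 hf
  by_cases hcf : coeff δ f = 0
  · obtain ⟨l, f₀, hf₀, heq, hent⟩ := decomp g hadm hg hs hf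
    have hsum0 :
        (l.map (fun x => x.2.1 * coeff (mE (ord := ord) g hg x.2.2) (pB g x.2.2))).sum = 0 := by
      have h2 : coeff δ f₀ = 0 := coeff_zero_of_closure_lt g hf₀
      have h3 : coeff δ ((l.map fun x => monomial x.1 x.2.1 * pB g x.2.2).sum)
          = (l.map (fun x => coeff δ (monomial x.1 x.2.1 * pB g x.2.2))).sum := by
        rw [show (coeff δ : MvPolynomial (Fin n) K → K) = (lcoeff K δ : _ →ₗ[K] K) from rfl]
        rw [map_list_sum (lcoeff K δ), List.map_map]
        rfl
      have h4 : (l.map (fun x => coeff δ (monomial x.1 x.2.1 * pB g x.2.2)))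
          = (l.map (fun x => x.2.1 * coeff (mE (ord := ord) g hg x.2.2) (pB g x.2.2))) := by
        refine List.map_congr_left (fun x hx => ?_)
        rw [← (hent x hx).2, coeff_monomial_mul]
      rw [heq, coeff_add, h2, add_zero, h3, h4] at hcf
      exact hcf
    have hlist := telescope g hadm hg hs hcop l.length l le_rfl hent hsum0
    have hfc : f ∈ AddSubmonoid.closure (SS (ord := ord) g t (fun x => ord.lt x δ)) := by
      rw [heq]; exact AddSubmonoid.add_mem _ hlist hf₀
    rcases bound_extract g hs hfc with h | ⟨δ'', hδ'', hmem⟩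
    · exact absurd h hf0
    · exact IH δ'' hδ'' f hf0 hmem
  · obtain ⟨β, hβ, hle⟩ := extract_of_coeff_ne g hadm hg hf hcf
    have h1 : leadExp ord f hf0 = δ :=
      ord.le_antisymm _ _ (lm_le_of_closure_le g hf0 hf) (ole_lm hf0 (mem_support_iff.mpr hcf))
    exact ⟨β, hβ, fun k => by rw [h1]; exact hle k⟩

lemma prodpow_mem (β : Fin s → ℕ) :
    (∏ i, g i ^ β i) ∈ (Ideal.span (Set.range g)) ^ (∑ i, β i) := by
  classical
  have key : ∀ A : Finset (Fin s),
      (∏ i ∈ A, g i ^ β i) ∈ (Ideal.span (Set.range g)) ^ (∑ i ∈ A, β i) := by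
    intro A
    induction A using Finset.induction_on with
    | empty => simp only [Finset.prod_empty, Finset.sum_empty, pow_zero, Ideal.one_eq_top]; trivial
    | @insert a A' hx ih =>
      rw [Finset.prod_insert hx, Finset.sum_insert hx, pow_add]
      exact Ideal.mul_mem_mul (Ideal.pow_mem_pow (Ideal.subset_span (Set.mem_range_self a)) _) ih
  exact key Finset.univ

lemma span_pow_le (u : ℕ) :
    (Ideal.span (Set.range g)) ^ u ≤
      Ideal.span {p | ∃ β : Fin s → ℕ, (∑ i, β i) = u ∧ p = ∏ i, g i ^ β i} := by
  classical
  induction u with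
  | zero =>
    intro x _
    have h1 : (Ideal.span {p : MvPolynomial (Fin n) K |
        ∃ β : Fin s → ℕ, (∑ i, β i) = 0 ∧ p = ∏ i, g i ^ β i}) = ⊤ := by
      rw [Ideal.eq_top_iff_one]
      have hmem0 : (1 : MvPolynomial (Fin n) K) ∈ {p : MvPolynomial (Fin n) K |
          ∃ β : Fin s → ℕ, (∑ i, β i) = 0 ∧ p = ∏ i, g i ^ β i} :=
        ⟨fun _ => 0, by simp, by simp⟩
      exact Ideal.subset_span hmem0
    rw [h1]; trivial
  | succ u ih =>
    rw [pow_succ]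
    have h1 : (Ideal.span (Set.range g)) ^ u * Ideal.span (Set.range g) ≤
        Ideal.span {p : MvPolynomial (Fin n) K |
          ∃ β : Fin s → ℕ, (∑ i, β i) = u ∧ p = ∏ i, g i ^ β i} * Ideal.span (Set.range g) :=
      Ideal.mul_mono ih le_rfl
    refine le_trans h1 ?_
    rw [Ideal.span_mul_span']
    refine Ideal.span_le.mpr ?_
    rintro z hz
    rw [Set.mem_mul] at hz
    obtain ⟨p, ⟨β, hβ, rfl⟩, q, ⟨i, rfl⟩, rfl⟩ := hz
    refine Ideal.subset_span ⟨fun j => β j + if j = i then 1 else 0, ?_, ?_⟩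
    · rw [Finset.sum_add_distrib, hβ, Finset.sum_ite_eq' Finset.univ i (fun _ => 1)]
      simp
    · rw [show (∏ j, g j ^ (β j + if j = i then 1 else 0))
          = (∏ j, g j ^ β j) * ∏ j, g j ^ (if j = i then 1 else 0) from by
        rw [← Finset.prod_mul_distrib]; exact Finset.prod_congr rfl (fun j _ => pow_add _ _ _)]
      congr 1
      rw [show (fun j => g j ^ (if j = i then 1 else 0)) = fun j => if j = i then g j else 1 from
        funext (fun j => by split <;> simp)]
      rw [Finset.prod_ite_eq' Finset.univ i (fun j => g j)]
      simp

end Main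
end StmtAux

open StmtAux MvPolynomial in

/-- Buchberger's first criterion for powers: products of coprime-leading-monomial
generators form a Gröbner basis of the ideal power. -/
theorem stmt_10 {K : Type*} [Field K] {n s t : ℕ} (hs : 0 < s) (ht : 0 < t)
    (ord : LinearOrder (Fin n →₀ ℕ)) (hadm : Admissible ord)
    (g : Fin s → MvPolynomial (Fin n) K) (hg : ∀ i, g i ≠ 0)
    (hcop : ∀ i j, i ≠ j → ∀ k,
      leadExp ord (g i) (hg i) k = 0 ∨ leadExp ord (g j) (hg j) k = 0) :
    IsGroebner ord
      {p | ∃ β : Fin s → ℕ, (∑ i, β i) = t ∧ p = ∏ i, g i ^ β i}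
      ((Ideal.span (Set.range g)) ^ t) := by
  classical
  have hspan : Ideal.span {p | ∃ β : Fin s → ℕ, (∑ i, β i) = t ∧ p = ∏ i, g i ^ β i}
      = (Ideal.span (Set.range g)) ^ t := by
    refine le_antisymm ?_ (span_pow_le g t)
    refine Ideal.span_le.mpr ?_
    rintro p ⟨β, hβ, rfl⟩
    rw [← hβ]
    exact prodpow_mem g β
  refine ⟨hspan, ?_⟩
  intro f hfI hf
  have hfs : f ∈ Ideal.span {p | ∃ β : Fin s → ℕ, (∑ i, β i) = t ∧ p = ∏ i, g i ^ β i} := by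
    rw [hspan]; exact hfI
  have hclos : f ∈ AddSubmonoid.closure (SS (ord := ord) g t (fun _ => True)) := by
    refine Submodule.span_induction ?_ ?_ ?_ ?_ hfs
    · rintro p ⟨β, hβ, rfl⟩
      exact AddSubmonoid.subset_closure ⟨⟨1, β, hβ, (one_mul _).symm⟩, fun _ => trivial⟩
    · exact AddSubmonoid.zero_mem _
    · intro x y _ _ hx hy; exact AddSubmonoid.add_mem _ hx hy
    · intro r x _ hx
      rw [smul_eq_mul]
      exact mul_mem_closure_SS g hs r hx
  rcases bound_extract g hs hclos with h | ⟨δ'', -, hmem⟩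
  · exact absurd h hf
  obtain ⟨β, hβ, hle⟩ := main_ind g hadm hg hs hcop δ'' f hf hmem
  refine ⟨pB g β, ⟨β, hβ, rfl⟩, pB_ne g hg β, fun i => ?_⟩
  rw [lm_pB g hadm hg β]
  exact hle i
end
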